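/- arXiv:1403.6355 — 5 statements merged into one kernel-verified Lean document; each statement's English description precedes it below -/
import Mathlib

section
/- Let D ⊂ ℝ^d be open and bounded and let 1 ≤ p < ∞. For any (μ, f) and (θ, g) in TL^p(D), one has d_{TL^p}((μ,f),(θ,g)) = 𝐝_p((Id × f)_# μ, (Id × g)_# θ), where (Id × f)(x) = (x, f(x)); that is, the TL^p distance between (μ,f) and (θ,g) equals the transportation distance 𝐝_p between the push-forward measures supported on the graphs of f and g. -/
open MeasureTheory Filter Set ENNReal
open scoped InnerProductSpace NNReal Topology

noncomputable section

/-- A set `D ⊆ ℝ^d` has Lipschitz boundary: near every boundary point, after a rotation,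
`D` is the subgraph of a Lipschitz function of the first `d-1` coordinates. -/
def HasLipschitzBoundary {d : ℕ} (D : Set (EuclideanSpace ℝ (Fin d))) : Prop :=
  ∀ x ∈ frontier D,
    ∃ (U : Set (EuclideanSpace ℝ (Fin d)))
      (e : EuclideanSpace ℝ (Fin d) ≃ₗᵢ[ℝ] EuclideanSpace ℝ (Fin d))
      (φ : EuclideanSpace ℝ (Fin d) → ℝ) (K : ℝ≥0),
      IsOpen U ∧ x ∈ U ∧ LipschitzWith K φ ∧
      (∀ p q : EuclideanSpace ℝ (Fin d),
        (∀ i : Fin d, (i : ℕ) + 1 ≠ d → p i = q i) → φ p = φ q) ∧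
      D ∩ U = {y | y ∈ U ∧ ∀ i : Fin d, (i : ℕ) + 1 = d → e y i < φ (e y)}

/-- Conditions (K1)-(K3) on the radial profile of the kernel. -/
structure KernelConditions (d : ℕ) (ηf : ℝ → ℝ) : Prop where
  nonneg : ∀ r : ℝ, 0 ≤ r → 0 ≤ ηf r
  pos_zero : 0 < ηf 0
  continuousAt_zero : ContinuousWithinAt ηf (Ici 0) 0
  antitone : ∀ r s : ℝ, 0 ≤ r → r ≤ s → ηf s ≤ ηf r
  moment_finite : IntegrableOn (fun r : ℝ => ηf r * r ^ d) (Ioi (0 : ℝ))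

/-- The rescaled kernel `η_ε(z) = ε^{-d} η(z/ε)` associated to a radial profile. -/
def etaEps {d : ℕ} (ηf : ℝ → ℝ) (ε : ℝ) (z : EuclideanSpace ℝ (Fin d)) : ℝ :=
  (ε ^ d)⁻¹ * ηf (‖z‖ / ε)

/-- The surface tension `σ_η = ∫ η(h) |h·e| dh` (`e` a unit vector). -/
def surfaceTension {d : ℕ} (ηf : ℝ → ℝ) (e1 : EuclideanSpace ℝ (Fin d)) : ℝ :=
  ∫ h : EuclideanSpace ℝ (Fin d), ηf ‖h‖ * |⟪h, e1⟫_ℝ|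

/-- The graph total variation `GTV_{n,ε}`. -/
def graphTV {d : ℕ} (ηf : ℝ → ℝ) (X : ℕ → EuclideanSpace ℝ (Fin d)) (n : ℕ) (ε : ℝ)
    (u : EuclideanSpace ℝ (Fin d) → ℝ) : ℝ :=
  (1 / (ε * (n : ℝ) ^ 2)) * ∑ i ∈ Finset.range n, ∑ j ∈ Finset.range n,
    etaEps ηf ε (X i - X j) * |u (X i) - u (X j)|

/-- Divergence of a vector field on `ℝ^d`. -/
def diverg {d : ℕ} (φ : EuclideanSpace ℝ (Fin d) → EuclideanSpace ℝ (Fin d))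
    (x : EuclideanSpace ℝ (Fin d)) : ℝ :=
  ∑ i : Fin d, fderiv ℝ φ x (EuclideanSpace.single i 1) i

/-- The weighted total variation `TV(u; ψ)`. -/
def weightedTV {d : ℕ} (D : Set (EuclideanSpace ℝ (Fin d)))
    (u : EuclideanSpace ℝ (Fin d) → ℝ) (ψ : EuclideanSpace ℝ (Fin d) → ℝ) : ℝ≥0∞ :=
  ⨆ (φ : EuclideanSpace ℝ (Fin d) → EuclideanSpace ℝ (Fin d))
    (_ : ContDiff ℝ (⊤ : ℕ∞) φ ∧ HasCompactSupport φ ∧ tsupport φ ⊆ D ∧ ∀ x ∈ D, ‖φ x‖ ≤ ψ x),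
    ENNReal.ofReal (∫ x in D, u x * diverg φ x)

/-- The nonlocal total variation `TV_ε(u; ρ)`. -/
def nonlocalTV {d : ℕ} (D : Set (EuclideanSpace ℝ (Fin d))) (ηf : ℝ → ℝ) (ε : ℝ)
    (u ρ : EuclideanSpace ℝ (Fin d) → ℝ) : ℝ≥0∞ :=
  ENNReal.ofReal (1 / ε) *
    ∫⁻ x in D, ∫⁻ y in D, ENNReal.ofReal (etaEps ηf ε (x - y) * |u x - u y| * ρ x * ρ y)

/-- Couplings (transportation plans) between two measures. -/
def couplings {α β : Type*} [MeasurableSpace α] [MeasurableSpace β]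
    (μ : Measure α) (θ : Measure β) : Set (Measure (α × β)) :=
  {π | π.map Prod.fst = μ ∧ π.map Prod.snd = θ}

/-- The `TL^p` distance between `(μ, f)` and `(θ, g)`. -/
def dTL {E : Type*} [NormedAddCommGroup E] [MeasurableSpace E] (p : ℝ)
    (μ : Measure E) (f : E → ℝ) (θ : Measure E) (g : E → ℝ) : ℝ≥0∞ :=
  ⨅ π ∈ couplings μ θ,
    (∫⁻ z, ENNReal.ofReal (‖z.1 - z.2‖ ^ p + |f z.1 - g z.2| ^ p) ∂π) ^ (1 / p)

/-- The transportation distance `𝐝_p` on probability measures on `D × ℝ`. -/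
def dProd {E : Type*} [NormedAddCommGroup E] [MeasurableSpace E] (p : ℝ)
    (γ γ' : Measure (E × ℝ)) : ℝ≥0∞ :=
  ⨅ π ∈ couplings γ γ',
    (∫⁻ z, ENNReal.ofReal (‖z.1.1 - z.2.1‖ ^ p + |z.1.2 - z.2.2| ^ p) ∂π) ^ (1 / p)

/-- The empirical measure `ν_n = (1/n) ∑_{i<n} δ_{X_i(ω)}`. -/
def empMeasure {d : ℕ} {Ω : Type*} [MeasurableSpace Ω]
    (X : ℕ → Ω → EuclideanSpace ℝ (Fin d)) (n : ℕ) (ω : Ω) :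
    Measure (EuclideanSpace ℝ (Fin d)) :=
  ((n : ℝ≥0∞))⁻¹ • ∑ i ∈ Finset.range n, Measure.dirac (X i ω)

/-- Proposition 3.3: the `TL^p` distance equals the transportation distance between
the push-forward measures on the graphs. -/
theorem dTL_eq_dProd
    {d : ℕ} (D : Set (EuclideanSpace ℝ (Fin d)))
    (hDopen : IsOpen D) (hDbdd : Bornology.IsBounded D)
    (p : ℝ) (hp : 1 ≤ p)
    (μ θ : Measure (EuclideanSpace ℝ (Fin d)))
    (hμprob : IsProbabilityMeasure μ) (hθprob : IsProbabilityMeasure θ)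
    (hμD : μ Dᶜ = 0) (hθD : θ Dᶜ = 0)
    (f g : EuclideanSpace ℝ (Fin d) → ℝ)
    (hf : Measurable f) (hfp : MemLp f (ENNReal.ofReal p) μ)
    (hg : Measurable g) (hgp : MemLp g (ENNReal.ofReal p) θ) :
    dTL p μ f θ g = dProd p (μ.map (fun x => (x, f x))) (θ.map (fun x => (x, g x))) := by
  have hp0 : (0:ℝ) ≤ p := le_trans zero_le_one hp
  set F : EuclideanSpace ℝ (Fin d) → EuclideanSpace ℝ (Fin d) × ℝ := fun x => (x, f x)
    with hFdef
  set G : EuclideanSpace ℝ (Fin d) → EuclideanSpace ℝ (Fin d) × ℝ := fun x => (x, g x)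
    with hGdef
  have hFm : Measurable F := measurable_id.prodMk hf
  have hGm : Measurable G := measurable_id.prodMk hg
  have hrpow : Measurable fun t : ℝ => t ^ p := (Real.continuous_rpow_const hp0).measurable
  have m1 : Measurable fun z : (EuclideanSpace ℝ (Fin d)) × (EuclideanSpace ℝ (Fin d)) =>
      ENNReal.ofReal (‖z.1 - z.2‖ ^ p + |f z.1 - g z.2| ^ p) := by
    apply Measurable.ennreal_ofReal
    exact (hrpow.comp (measurable_fst.sub measurable_snd).norm).add
      (hrpow.comp ((hf.comp measurable_fst).sub (hg.comp measurable_snd)).abs)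
  have m2 : Measurable fun z : ((EuclideanSpace ℝ (Fin d)) × ℝ) × ((EuclideanSpace ℝ (Fin d)) × ℝ) =>
      ENNReal.ofReal (‖z.1.1 - z.2.1‖ ^ p + |z.1.2 - z.2.2| ^ p) := by
    apply Measurable.ennreal_ofReal
    exact (hrpow.comp (measurable_fst.fst.sub measurable_snd.fst).norm).add
      (hrpow.comp (measurable_fst.snd.sub measurable_snd.snd).abs)
  unfold dTL dProd
  apply le_antisymm
  · refine le_iInf₂ fun π' hπ' => ?_
    obtain ⟨hπ'1, hπ'2⟩ := hπ'
    set S : ((EuclideanSpace ℝ (Fin d)) × ℝ) × ((EuclideanSpace ℝ (Fin d)) × ℝ) → (EuclideanSpace ℝ (Fin d)) × (EuclideanSpace ℝ (Fin d)) := fun z => (z.1.1, z.2.1) with hSdef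
    have hSm : Measurable S := measurable_fst.fst.prodMk measurable_snd.fst
    have hmem : π'.map S ∈ couplings μ θ := by
      constructor
      · rw [Measure.map_map measurable_fst hSm]
        have h1 : (Prod.fst ∘ S) = (Prod.fst ∘ (Prod.fst : ((EuclideanSpace ℝ (Fin d)) × ℝ) × ((EuclideanSpace ℝ (Fin d)) × ℝ) → (EuclideanSpace ℝ (Fin d)) × ℝ)) := rfl
        rw [h1, ← Measure.map_map measurable_fst measurable_fst, hπ'1,
          Measure.map_map measurable_fst hFm]
        have h2 : (Prod.fst ∘ F) = id := rfl
        rw [h2, Measure.map_id]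
      · rw [Measure.map_map measurable_snd hSm]
        have h1 : (Prod.snd ∘ S) = (Prod.fst ∘ (Prod.snd : ((EuclideanSpace ℝ (Fin d)) × ℝ) × ((EuclideanSpace ℝ (Fin d)) × ℝ) → (EuclideanSpace ℝ (Fin d)) × ℝ)) := rfl
        rw [h1, ← Measure.map_map measurable_fst measurable_snd, hπ'2,
          Measure.map_map measurable_fst hGm]
        have h2 : (Prod.fst ∘ G) = id := rfl
        rw [h2, Measure.map_id]
    have hae1 : ∀ᵐ z ∂π', z.1.2 = f z.1.1 := by
      have hmf : Measurable fun w : (EuclideanSpace ℝ (Fin d)) × ℝ => f w.1 := hf.comp measurable_fst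
      have hs : MeasurableSet {w : (EuclideanSpace ℝ (Fin d)) × ℝ | w.2 = f w.1} :=
        measurableSet_eq_fun measurable_snd hmf
      rw [ae_iff]
      have hset : {z : ((EuclideanSpace ℝ (Fin d)) × ℝ) × ((EuclideanSpace ℝ (Fin d)) × ℝ) | ¬ z.1.2 = f z.1.1}
          = Prod.fst ⁻¹' {w : (EuclideanSpace ℝ (Fin d)) × ℝ | w.2 = f w.1}ᶜ := rfl
      rw [hset, ← Measure.map_apply measurable_fst hs.compl, hπ'1,
        Measure.map_apply hFm hs.compl]
      have hpre : F ⁻¹' {w : (EuclideanSpace ℝ (Fin d)) × ℝ | w.2 = f w.1}ᶜ = ∅ := by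
        ext x; simp [hFdef]
      rw [hpre]; simp
    have hae2 : ∀ᵐ z ∂π', z.2.2 = g z.2.1 := by
      have hmg : Measurable fun w : (EuclideanSpace ℝ (Fin d)) × ℝ => g w.1 := hg.comp measurable_fst
      have hs : MeasurableSet {w : (EuclideanSpace ℝ (Fin d)) × ℝ | w.2 = g w.1} :=
        measurableSet_eq_fun measurable_snd hmg
      rw [ae_iff]
      have hset : {z : ((EuclideanSpace ℝ (Fin d)) × ℝ) × ((EuclideanSpace ℝ (Fin d)) × ℝ) | ¬ z.2.2 = g z.2.1}
          = Prod.snd ⁻¹' {w : (EuclideanSpace ℝ (Fin d)) × ℝ | w.2 = g w.1}ᶜ := rfl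
      rw [hset, ← Measure.map_apply measurable_snd hs.compl, hπ'2,
        Measure.map_apply hGm hs.compl]
      have hpre : G ⁻¹' {w : (EuclideanSpace ℝ (Fin d)) × ℝ | w.2 = g w.1}ᶜ = ∅ := by
        ext x; simp [hGdef]
      rw [hpre]; simp
    have hcost : (∫⁻ z, ENNReal.ofReal (‖z.1 - z.2‖ ^ p + |f z.1 - g z.2| ^ p)
        ∂(π'.map S))
        = ∫⁻ z, ENNReal.ofReal (‖z.1.1 - z.2.1‖ ^ p + |z.1.2 - z.2.2| ^ p) ∂π' := by
      rw [lintegral_map m1 hSm]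
      refine lintegral_congr_ae ?_
      filter_upwards [hae1, hae2] with z h1 h2
      simp only [hSdef, h1, h2]
    exact iInf₂_le_of_le (π'.map S) hmem (by rw [hcost])
  · refine le_iInf₂ fun π hπ => ?_
    obtain ⟨hπ1, hπ2⟩ := hπ
    set T : (EuclideanSpace ℝ (Fin d)) × (EuclideanSpace ℝ (Fin d)) → ((EuclideanSpace ℝ (Fin d)) × ℝ) × ((EuclideanSpace ℝ (Fin d)) × ℝ) := fun z => (F z.1, G z.2) with hTdef
    have hTm : Measurable T := (hFm.comp measurable_fst).prodMk (hGm.comp measurable_snd)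
    have hmem : π.map T ∈ couplings (μ.map F) (θ.map G) := by
      constructor
      · rw [Measure.map_map measurable_fst hTm]
        have h1 : (Prod.fst ∘ T) = (F ∘ Prod.fst) := rfl
        rw [h1, ← Measure.map_map hFm measurable_fst, hπ1]
      · rw [Measure.map_map measurable_snd hTm]
        have h1 : (Prod.snd ∘ T) = (G ∘ Prod.snd) := rfl
        rw [h1, ← Measure.map_map hGm measurable_snd, hπ2]
    have hcost : (∫⁻ z, ENNReal.ofReal (‖z.1.1 - z.2.1‖ ^ p + |z.1.2 - z.2.2| ^ p)
        ∂(π.map T))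
        = ∫⁻ z, ENNReal.ofReal (‖z.1 - z.2‖ ^ p + |f z.1 - g z.2| ^ p) ∂π := by
      rw [lintegral_map m2 hTm]
    exact iInf₂_le_of_le (π.map T) hmem (by rw [hcost])

end
end

section
/- Let D ⊂ ℝ^d be open and bounded and let 1 ≤ p < ∞. Then d_{TL^p} is a metric on TL^p(D): it is nonnegative, finite, symmetric, satisfies the triangle inequality, and d_{TL^p}((μ,f),(θ,g)) = 0 holds if and only if μ = θ and f = g in L^p(D, μ). -/
open MeasureTheory Filter Set ENNReal
open scoped InnerProductSpace NNReal Topology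

noncomputable section

section TLpAuxiliary

open ProbabilityTheory

variable {α β : Type*} [MeasurableSpace α] [MeasurableSpace β]

lemma couplings_isProbabilityMeasure {μ : Measure α} {θ : Measure β}
    [IsProbabilityMeasure μ] {π : Measure (α × β)} (hπ : π ∈ couplings μ θ) :
    IsProbabilityMeasure π := by
  refine ⟨?_⟩
  have h1 : π.map Prod.fst Set.univ = μ Set.univ := by rw [hπ.1]
  rw [Measure.map_apply measurable_fst MeasurableSet.univ, Set.preimage_univ] at h1
  rw [h1, measure_univ]

lemma prod_mem_couplings (μ : Measure α) (θ : Measure β)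
    [IsProbabilityMeasure μ] [IsProbabilityMeasure θ] :
    μ.prod θ ∈ couplings μ θ :=
  ⟨Measure.fst_prod, Measure.snd_prod⟩

lemma swap_mem_couplings {μ : Measure α} {θ : Measure β} {π : Measure (α × β)}
    (hπ : π ∈ couplings μ θ) : π.map Prod.swap ∈ couplings θ μ := by
  constructor
  · rw [Measure.map_map measurable_fst measurable_swap]; exact hπ.2
  · rw [Measure.map_map measurable_snd measurable_swap]; exact hπ.1

lemma two_point_minkowski {p : ℝ} (hp : 1 ≤ p) (a b c d : ℝ≥0∞) :
    (a + b) ^ p + (c + d) ^ p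
      ≤ ((a ^ p + c ^ p) ^ (1 / p) + (b ^ p + d ^ p) ^ (1 / p)) ^ p := by
  have hp0 : (0 : ℝ) < p := lt_of_lt_of_le one_pos hp
  have H := ENNReal.lintegral_Lp_add_le (μ := (Measure.count : Measure Bool))
      (f := fun i => if i then a else c) (g := fun i => if i then b else d)
      (measurable_of_countable _).aemeasurable (measurable_of_countable _).aemeasurable hp
  simp only [Pi.add_apply, lintegral_count, tsum_bool, if_false, if_true] at H
  have H2 := ENNReal.rpow_le_rpow H hp0.le
  rw [← ENNReal.rpow_mul, one_div_mul_cancel hp0.ne', ENNReal.rpow_one] at H2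
  calc (a + b) ^ p + (c + d) ^ p = (c + d) ^ p + (a + b) ^ p := by ring
    _ ≤ ((c ^ p + a ^ p) ^ (1 / p) + (d ^ p + b ^ p) ^ (1 / p)) ^ p := H2
    _ = ((a ^ p + c ^ p) ^ (1 / p) + (b ^ p + d ^ p) ^ (1 / p)) ^ p := by ring_nf

lemma le_biInf_add_biInf {ι ι' : Type*} {S : Set ι} {T : Set ι'}
    {F : ι → ℝ≥0∞} {G : ι' → ℝ≥0∞} {a : ℝ≥0∞}
    (h : ∀ i ∈ S, ∀ j ∈ T, a ≤ F i + G j) :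
    a ≤ (⨅ i ∈ S, F i) + (⨅ j ∈ T, G j) := by
  rw [iInf_subtype', iInf_subtype', ENNReal.iInf_add]
  simp_rw [ENNReal.add_iInf]
  exact le_iInf fun i => le_iInf fun j => h i i.2 j j.2

lemma closed_le_of_couplings {X : Type*} [MetricSpace X] [SecondCountableTopology X]
    [MeasurableSpace X] [OpensMeasurableSpace X] {γ γ' : Measure X}
    [IsProbabilityMeasure γ] [IsProbabilityMeasure γ'] {p : ℝ} (hp : 0 < p)
    (h : ∀ δ : ℝ≥0∞, 0 < δ → ∃ π ∈ couplings γ γ',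
      ∫⁻ z : X × X, ENNReal.ofReal (dist z.1 z.2 ^ p) ∂π < δ)
    {F : Set X} (hF : IsClosed F) : γ' F ≤ γ F := by
  have key : ∀ t : ℝ, 0 < t → γ' F ≤ γ (Metric.thickening t F) := by
    intro t ht
    refine ENNReal.le_of_forall_pos_le_add fun ε hε _ => ?_
    set c : ℝ≥0∞ := ENNReal.ofReal (t ^ p) with hc
    have hc0 : c ≠ 0 := by
      rw [hc, Ne, ENNReal.ofReal_eq_zero, not_le]
      positivity
    have hcT : c ≠ ⊤ := ENNReal.ofReal_ne_top
    obtain ⟨π, hπ, hcost⟩ := h ((ε : ℝ≥0∞) * c)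
      (by exact ENNReal.mul_pos (by exact_mod_cast hε.ne') hc0)
    have hmeas : Measurable fun z : X × X => ENNReal.ofReal (dist z.1 z.2 ^ p) :=
      ((continuous_dist.measurable).pow measurable_const).ennreal_ofReal
    have hsub : (Prod.snd ⁻¹' F : Set (X × X)) ⊆
        (Prod.fst ⁻¹' Metric.thickening t F)
          ∪ {z : X × X | c ≤ ENNReal.ofReal (dist z.1 z.2 ^ p)} := by
      intro z hz
      by_cases hd : dist z.1 z.2 < t
      · exact Or.inl (Metric.mem_thickening_iff.2 ⟨z.2, hz, hd⟩)
      · exact Or.inr (ENNReal.ofReal_le_ofReal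
          (Real.rpow_le_rpow ht.le (not_lt.1 hd) hp.le))
    have hstep : γ' F ≤ γ (Metric.thickening t F)
        + π {z : X × X | c ≤ ENNReal.ofReal (dist z.1 z.2 ^ p)} := by
      calc γ' F = π (Prod.snd ⁻¹' F) := by
            rw [← hπ.2, Measure.map_apply measurable_snd hF.measurableSet]
        _ ≤ π ((Prod.fst ⁻¹' Metric.thickening t F)
            ∪ {z : X × X | c ≤ ENNReal.ofReal (dist z.1 z.2 ^ p)}) := measure_mono hsub
        _ ≤ π (Prod.fst ⁻¹' Metric.thickening t F)
            + π {z : X × X | c ≤ ENNReal.ofReal (dist z.1 z.2 ^ p)} := measure_union_le _ _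
        _ = γ (Metric.thickening t F)
            + π {z : X × X | c ≤ ENNReal.ofReal (dist z.1 z.2 ^ p)} := by
            rw [← hπ.1, Measure.map_apply measurable_fst
              Metric.isOpen_thickening.measurableSet]
    refine hstep.trans (add_le_add le_rfl ?_)
    calc π {z : X × X | c ≤ ENNReal.ofReal (dist z.1 z.2 ^ p)}
        ≤ (∫⁻ z : X × X, ENNReal.ofReal (dist z.1 z.2 ^ p) ∂π) / c :=
          meas_ge_le_lintegral_div hmeas.aemeasurable hc0 hcT
      _ ≤ ((ε : ℝ≥0∞) * c) / c := ENNReal.div_le_div_right hcost.le c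
      _ = ε := by rw [mul_div_assoc, ENNReal.div_self hc0 hcT, mul_one]
  have htend := tendsto_measure_thickening_of_isClosed
    (μ := γ) ⟨1, one_pos, measure_ne_top γ _⟩ hF
  exact ge_of_tendsto htend (eventually_nhdsWithin_of_forall fun t ht => key t ht)

lemma measures_eq_of_closed {X : Type*} [TopologicalSpace X] [MeasurableSpace X]
    [BorelSpace X] {γ γ' : Measure X} [IsProbabilityMeasure γ] [IsProbabilityMeasure γ']
    (h : ∀ F : Set X, IsClosed F → γ F = γ' F) : γ = γ' := by
  refine ext_of_generate_finite {s : Set X | IsClosed s}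
    (‹BorelSpace X›.measurable_eq.trans borel_eq_generateFrom_isClosed)
    (fun s hs t ht _ => hs.inter ht) (fun s hs => h s hs) ?_
  simp [measure_univ]

lemma exists_coupling_cost_lt {E : Type*} [NormedAddCommGroup E] [MeasurableSpace E]
    {p : ℝ} (hp : 0 < p) {μ θ : Measure E} {f g : E → ℝ}
    (h0 : dTL p μ f θ g = 0) {δ : ℝ≥0∞} (hδ : 0 < δ) :
    ∃ π ∈ couplings μ θ,
      ∫⁻ z, ENNReal.ofReal (‖z.1 - z.2‖ ^ p + |f z.1 - g z.2| ^ p) ∂π < δ := by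
  have hδ' : (0 : ℝ≥0∞) < δ ^ (1 / p) :=
    ENNReal.rpow_pos_of_nonneg hδ (by positivity)
  have hlt : dTL p μ f θ g < δ ^ (1 / p) := h0 ▸ hδ'
  rw [dTL, iInf_lt_iff] at hlt
  obtain ⟨π, hπlt⟩ := hlt
  rw [iInf_lt_iff] at hπlt
  obtain ⟨hπ, hπlt⟩ := hπlt
  refine ⟨π, hπ, ?_⟩
  have h2 := ENNReal.rpow_lt_rpow hπlt hp
  rwa [← ENNReal.rpow_mul, ← ENNReal.rpow_mul, one_div_mul_cancel hp.ne',
    ENNReal.rpow_one, ENNReal.rpow_one] at h2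

lemma triangle_couplings {E : Type*} [MeasurableSpace E] [StandardBorelSpace E] [Nonempty E]
    {μ θ κm : Measure E} [IsProbabilityMeasure μ] [IsProbabilityMeasure θ]
    [IsProbabilityMeasure κm]
    {π₁ π₂ : Measure (E × E)} (h₁ : π₁ ∈ couplings μ θ) (h₂ : π₂ ∈ couplings θ κm)
    {c12 c23 c13 : E × E → ℝ≥0∞} (hc12 : Measurable c12) (hc23 : Measurable c23)
    (hc13 : Measurable c13) {p : ℝ} (hp : 1 ≤ p)
    (hpt : ∀ x y z : E, c13 (x, z) ≤ ((c12 (x, y)) ^ (1/p) + (c23 (y, z)) ^ (1/p)) ^ p) :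
    ∃ π ∈ couplings μ κm,
      (∫⁻ z, c13 z ∂π) ^ (1/p)
        ≤ (∫⁻ z, c12 z ∂π₁) ^ (1/p) + (∫⁻ z, c23 z ∂π₂) ^ (1/p) := by
  have hp0 : (0 : ℝ) < p := lt_of_lt_of_le one_pos hp
  haveI : IsProbabilityMeasure π₁ := couplings_isProbabilityMeasure h₁
  haveI : IsProbabilityMeasure π₂ := couplings_isProbabilityMeasure h₂
  set ρ : Measure (E × E) := π₁.map Prod.swap with hρdef
  have hρc : ρ ∈ couplings θ μ := swap_mem_couplings h₁
  haveI : IsProbabilityMeasure ρ := couplings_isProbabilityMeasure hρc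
  have hρfst : ρ.fst = θ := hρc.1
  have hfst₂ : π₂.fst = θ := h₂.1
  set K₁ := ρ.condKernel with hK₁
  set K₂ := π₂.condKernel with hK₂
  have hd₁ : θ ⊗ₘ K₁ = ρ := by rw [← hρfst]; exact ρ.disintegrate _
  have hd₂ : θ ⊗ₘ K₂ = π₂ := by rw [← hfst₂]; exact π₂.disintegrate _
  set τ : Measure (E × E × E) := θ ⊗ₘ (K₁ ×ₖ K₂) with hτ
  have hm12 : Measurable fun w : E × E × E => (w.1, w.2.1) :=
    measurable_fst.prodMk (measurable_fst.comp measurable_snd)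
  have hm13 : Measurable fun w : E × E × E => (w.1, w.2.2) :=
    measurable_fst.prodMk (measurable_snd.comp measurable_snd)
  have hm23 : Measurable fun w : E × E × E => (w.2.1, w.2.2) :=
    (measurable_fst.comp measurable_snd).prodMk (measurable_snd.comp measurable_snd)
  have hm21 : Measurable fun w : E × E × E => (w.2.1, w.1) :=
    (measurable_fst.comp measurable_snd).prodMk measurable_fst
  have hproj1 : τ.map (fun w : E × E × E => (w.1, w.2.1)) = ρ := by
    rw [← hd₁]
    ext s hs
    rw [Measure.map_apply hm12 hs, hτ, Measure.compProd_apply (hm12 hs),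
      Measure.compProd_apply hs]
    refine lintegral_congr fun y => ?_
    have hset : (Prod.mk y ⁻¹' ((fun w : E × E × E => (w.1, w.2.1)) ⁻¹' s))
        = (Prod.mk y ⁻¹' s) ×ˢ (Set.univ : Set E) := by
      ext v; simp [Set.mem_prod]
    rw [hset, Kernel.prod_apply, Measure.prod_prod, measure_univ, mul_one]
  have hproj2 : τ.map (fun w : E × E × E => (w.1, w.2.2)) = π₂ := by
    rw [← hd₂]
    ext s hs
    rw [Measure.map_apply hm13 hs, hτ, Measure.compProd_apply (hm13 hs),
      Measure.compProd_apply hs]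
    refine lintegral_congr fun y => ?_
    have hset : (Prod.mk y ⁻¹' ((fun w : E × E × E => (w.1, w.2.2)) ⁻¹' s))
        = (Set.univ : Set E) ×ˢ (Prod.mk y ⁻¹' s) := by
      ext v; simp [Set.mem_prod]
    rw [hset, Kernel.prod_apply, Measure.prod_prod, measure_univ, one_mul]
  have hπ₁τ : τ.map (fun w : E × E × E => (w.2.1, w.1)) = π₁ := by
    have h1 : π₁ = ρ.map Prod.swap := by
      rw [hρdef, Measure.map_map measurable_swap measurable_swap]
      simp [Prod.swap_swap_eq, Measure.map_id]
    rw [h1, ← hproj1, Measure.map_map measurable_swap hm12]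
    rfl
  set π : Measure (E × E) := τ.map (fun w : E × E × E => (w.2.1, w.2.2)) with hπdef
  have hπmem : π ∈ couplings μ κm := by
    constructor
    · rw [hπdef, Measure.map_map measurable_fst hm23]
      have h1 := hρc.2
      rw [← hproj1, Measure.map_map measurable_snd hm12] at h1
      exact h1
    · rw [hπdef, Measure.map_map measurable_snd hm23]
      have h1 := h₂.2
      rw [← hproj2, Measure.map_map measurable_snd hm13] at h1
      exact h1
  refine ⟨π, hπmem, ?_⟩
  set A : E × E × E → ℝ≥0∞ := fun w => (c12 (w.2.1, w.1)) ^ (1/p) with hA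
  set B : E × E × E → ℝ≥0∞ := fun w => (c23 (w.1, w.2.2)) ^ (1/p) with hB
  have hAm : Measurable A := (hc12.comp hm21).pow measurable_const
  have hBm : Measurable B := (hc23.comp hm13).pow measurable_const
  have hrinv : ∀ x : ℝ≥0∞, (x ^ (1/p)) ^ p = x := fun x => by
    rw [← ENNReal.rpow_mul, one_div_mul_cancel hp0.ne', ENNReal.rpow_one]
  calc (∫⁻ z, c13 z ∂π) ^ (1/p)
      = (∫⁻ w, c13 (w.2.1, w.2.2) ∂τ) ^ (1/p) := by
        rw [hπdef, lintegral_map hc13 hm23]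
    _ ≤ (∫⁻ w, (A w + B w) ^ p ∂τ) ^ (1/p) := by
        refine ENNReal.rpow_le_rpow (lintegral_mono fun w => ?_) (by positivity)
        exact hpt w.2.1 w.1 w.2.2
    _ ≤ (∫⁻ w, A w ^ p ∂τ) ^ (1/p) + (∫⁻ w, B w ^ p ∂τ) ^ (1/p) := by
        have h3 := ENNReal.lintegral_Lp_add_le (μ := τ) hAm.aemeasurable hBm.aemeasurable hp
        simpa [Pi.add_apply] using h3
    _ = (∫⁻ z, c12 z ∂π₁) ^ (1/p) + (∫⁻ z, c23 z ∂π₂) ^ (1/p) := by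
        congr 1
        · have h4 : ∀ w : E × E × E, A w ^ p = c12 (w.2.1, w.1) := fun w => hrinv _
          simp_rw [h4]
          rw [← hπ₁τ, lintegral_map hc12 hm21]
        · have h4 : ∀ w : E × E × E, B w ^ p = c23 (w.1, w.2.2) := fun w => hrinv _
          simp_rw [h4]
          rw [← hproj2, lintegral_map hc23 hm13]

lemma ofReal_pairCost {p : ℝ} (hp0 : 0 < p) {s t : ℝ} (hs : 0 ≤ s) (ht : 0 ≤ t) :
    ENNReal.ofReal (s ^ p + t ^ p) = (ENNReal.ofReal s) ^ p + (ENNReal.ofReal t) ^ p := by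
  rw [ENNReal.ofReal_add (Real.rpow_nonneg hs p) (Real.rpow_nonneg ht p),
    ENNReal.ofReal_rpow_of_nonneg hs hp0.le, ENNReal.ofReal_rpow_of_nonneg ht hp0.le]

lemma cost_triangle_pointwise {E : Type*} [NormedAddCommGroup E] {p : ℝ} (hp : 1 ≤ p)
    (f g h : E → ℝ) (x y z : E) :
    ENNReal.ofReal (‖x - z‖ ^ p + |f x - h z| ^ p)
      ≤ ((ENNReal.ofReal (‖x - y‖ ^ p + |f x - g y| ^ p)) ^ (1/p)
        + (ENNReal.ofReal (‖y - z‖ ^ p + |g y - h z| ^ p)) ^ (1/p)) ^ p := by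
  have hp0 : (0 : ℝ) < p := lt_of_lt_of_le one_pos hp
  rw [ofReal_pairCost hp0 (norm_nonneg _) (abs_nonneg _),
    ofReal_pairCost hp0 (norm_nonneg _) (abs_nonneg _),
    ofReal_pairCost hp0 (norm_nonneg _) (abs_nonneg _)]
  have h1 : ENNReal.ofReal ‖x - z‖ ≤ ENNReal.ofReal ‖x - y‖ + ENNReal.ofReal ‖y - z‖ := by
    rw [← ENNReal.ofReal_add (norm_nonneg _) (norm_nonneg _)]
    exact ENNReal.ofReal_le_ofReal (norm_sub_le_norm_sub_add_norm_sub x y z)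
  have h2 : ENNReal.ofReal |f x - h z|
      ≤ ENNReal.ofReal |f x - g y| + ENNReal.ofReal |g y - h z| := by
    rw [← ENNReal.ofReal_add (abs_nonneg _) (abs_nonneg _)]
    exact ENNReal.ofReal_le_ofReal (abs_sub_le _ _ _)
  calc (ENNReal.ofReal ‖x - z‖) ^ p + (ENNReal.ofReal |f x - h z|) ^ p
      ≤ (ENNReal.ofReal ‖x - y‖ + ENNReal.ofReal ‖y - z‖) ^ p
        + (ENNReal.ofReal |f x - g y| + ENNReal.ofReal |g y - h z|) ^ p :=
        add_le_add (ENNReal.rpow_le_rpow h1 hp0.le) (ENNReal.rpow_le_rpow h2 hp0.le)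
    _ ≤ _ := two_point_minkowski hp _ _ _ _

lemma measurable_pairCost {E : Type*} [NormedAddCommGroup E] [MeasurableSpace E]
    [BorelSpace E] [SecondCountableTopology E] (p : ℝ) {f g : E → ℝ}
    (hf : Measurable f) (hg : Measurable g) :
    Measurable fun z : E × E =>
      ENNReal.ofReal (‖z.1 - z.2‖ ^ p + |f z.1 - g z.2| ^ p) := by
  apply Measurable.ennreal_ofReal
  exact (((measurable_fst.sub measurable_snd).norm).pow measurable_const).add
    (((hf.comp measurable_fst).sub (hg.comp measurable_snd)).abs.pow measurable_const)

lemma max_rpow_le {p a b : ℝ} (ha : 0 ≤ a) (hb : 0 ≤ b) :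
    (max a b) ^ p ≤ a ^ p + b ^ p := by
  rcases max_cases a b with ⟨he, _⟩ | ⟨he, _⟩ <;> rw [he]
  · exact le_add_of_nonneg_right (Real.rpow_nonneg hb p)
  · exact le_add_of_nonneg_left (Real.rpow_nonneg ha p)

lemma memLp_lintegral_lt_top {E : Type*} [MeasurableSpace E] {p : ℝ} (hp : 1 ≤ p)
    {ν : Measure E} {u : E → ℝ} (hu : MemLp u (ENNReal.ofReal p) ν) :
    ∫⁻ x, ENNReal.ofReal (|u x| ^ p) ∂ν < ⊤ := by
  have hp0 : (0 : ℝ) < p := lt_of_lt_of_le one_pos hp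
  have hne : ENNReal.ofReal p ≠ 0 := by
    rw [Ne, ENNReal.ofReal_eq_zero, not_le]; exact hp0
  have h2 := hu.2
  rw [eLpNorm_eq_lintegral_rpow_enorm_toReal hne ENNReal.ofReal_ne_top] at h2
  rw [ENNReal.toReal_ofReal hp0.le] at h2
  have hfin : ∫⁻ x, ‖u x‖ₑ ^ p ∂ν < ⊤ := by
    by_contra hcon
    rw [not_lt, top_le_iff] at hcon
    rw [hcon, ENNReal.top_rpow_of_pos (by positivity)] at h2
    exact absurd h2 (lt_irrefl _)
  have heq : ∀ x, ENNReal.ofReal (|u x| ^ p) = ‖u x‖ₑ ^ p := fun x => by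
    rw [← ENNReal.ofReal_rpow_of_nonneg (abs_nonneg _) hp0.le,
      Real.enorm_eq_ofReal_abs]
  simp_rw [heq]
  exact hfin

end TLpAuxiliary

/-- `d_{TL^p}` is a metric on `TL^p(D)`: nonnegative (automatic in `ℝ≥0∞`), finite,
symmetric, satisfies the triangle inequality, and vanishes exactly on equal elements. -/
theorem dTL_is_metric
    {d : ℕ} (D : Set (EuclideanSpace ℝ (Fin d)))
    (hDopen : IsOpen D) (hDbdd : Bornology.IsBounded D)
    (p : ℝ) (hp : 1 ≤ p) :
    -- finiteness
    (∀ (μ θ : Measure (EuclideanSpace ℝ (Fin d))) (f g : EuclideanSpace ℝ (Fin d) → ℝ),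
      IsProbabilityMeasure μ → μ Dᶜ = 0 → Measurable f → MemLp f (ENNReal.ofReal p) μ →
      IsProbabilityMeasure θ → θ Dᶜ = 0 → Measurable g → MemLp g (ENNReal.ofReal p) θ →
      dTL p μ f θ g ≠ ⊤) ∧
    -- symmetry
    (∀ (μ θ : Measure (EuclideanSpace ℝ (Fin d))) (f g : EuclideanSpace ℝ (Fin d) → ℝ),
      IsProbabilityMeasure μ → μ Dᶜ = 0 → Measurable f → MemLp f (ENNReal.ofReal p) μ →
      IsProbabilityMeasure θ → θ Dᶜ = 0 → Measurable g → MemLp g (ENNReal.ofReal p) θ →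
      dTL p μ f θ g = dTL p θ g μ f) ∧
    -- triangle inequality
    (∀ (μ θ κ : Measure (EuclideanSpace ℝ (Fin d)))
        (f g h : EuclideanSpace ℝ (Fin d) → ℝ),
      IsProbabilityMeasure μ → μ Dᶜ = 0 → Measurable f → MemLp f (ENNReal.ofReal p) μ →
      IsProbabilityMeasure θ → θ Dᶜ = 0 → Measurable g → MemLp g (ENNReal.ofReal p) θ →
      IsProbabilityMeasure κ → κ Dᶜ = 0 → Measurable h → MemLp h (ENNReal.ofReal p) κ →
      dTL p μ f κ h ≤ dTL p μ f θ g + dTL p θ g κ h) ∧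
    -- vanishing iff equality
    (∀ (μ θ : Measure (EuclideanSpace ℝ (Fin d))) (f g : EuclideanSpace ℝ (Fin d) → ℝ),
      IsProbabilityMeasure μ → μ Dᶜ = 0 → Measurable f → MemLp f (ENNReal.ofReal p) μ →
      IsProbabilityMeasure θ → θ Dᶜ = 0 → Measurable g → MemLp g (ENNReal.ofReal p) θ →
      (dTL p μ f θ g = 0 ↔ μ = θ ∧ f =ᵐ[μ] g)) := by
  have hp0 : (0 : ℝ) < p := lt_of_lt_of_le one_pos hp
  -- symmetry (one-sided)
  have symm_le : ∀ (μ θ : Measure (EuclideanSpace ℝ (Fin d))) (f g : (EuclideanSpace ℝ (Fin d)) → ℝ), Measurable f → Measurable g →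
      dTL p θ g μ f ≤ dTL p μ f θ g := by
    intro μ θ f g hf hg
    rw [dTL, dTL]
    refine le_iInf₂ fun π hπ => ?_
    refine le_trans (iInf₂_le (π.map Prod.swap) (swap_mem_couplings hπ)) ?_
    rw [lintegral_map (measurable_pairCost p hg hf) measurable_swap]
    apply le_of_eq
    congr 1
    refine lintegral_congr fun z => ?_
    simp only [Prod.fst_swap, Prod.snd_swap]
    rw [norm_sub_rev, abs_sub_comm]
  refine ⟨?_, ?_, ?_, ?_⟩
  · -- finiteness
    intro μ θ f g hμP hμD hf hfLp hθP hθD hg hgLp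
    haveI := hμP; haveI := hθP
    obtain ⟨C, hC⟩ := hDbdd.subset_closedBall 0
    have hmemprod := prod_mem_couplings μ θ
    have hae : ∀ᵐ z ∂(μ.prod θ), z.1 ∈ D ∧ z.2 ∈ D := by
      rw [ae_iff]
      refine measure_mono_null (t := (Dᶜ ×ˢ Set.univ) ∪ (Set.univ ×ˢ Dᶜ))
        (fun z hz => ?_) ?_
      · by_cases h1 : z.1 ∈ D
        · exact Or.inr ⟨Set.mem_univ _, fun h2 => hz ⟨h1, h2⟩⟩
        · exact Or.inl ⟨h1, Set.mem_univ _⟩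
      · refine le_antisymm ((measure_union_le _ _).trans ?_) zero_le
        rw [Measure.prod_prod, Measure.prod_prod, hμD, hθD]
        simp
    have hptw : ∀ᵐ z ∂(μ.prod θ),
        ENNReal.ofReal (‖z.1 - z.2‖ ^ p + |f z.1 - g z.2| ^ p)
          ≤ ENNReal.ofReal ((C + C) ^ p)
            + ENNReal.ofReal (2 ^ p * (|f z.1| ^ p + |g z.2| ^ p)) := by
      refine hae.mono fun z hz => ?_
      refine (ENNReal.ofReal_add_le).trans
        (add_le_add (ENNReal.ofReal_le_ofReal ?_) (ENNReal.ofReal_le_ofReal ?_))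
      · refine Real.rpow_le_rpow (norm_nonneg _) ?_ hp0.le
        have h1 : ‖z.1‖ ≤ C := by
          have := hC hz.1; rwa [Metric.mem_closedBall, dist_zero_right] at this
        have h2 : ‖z.2‖ ≤ C := by
          have := hC hz.2; rwa [Metric.mem_closedBall, dist_zero_right] at this
        calc ‖z.1 - z.2‖ ≤ ‖z.1‖ + ‖z.2‖ := norm_sub_le _ _
          _ ≤ C + C := add_le_add h1 h2
      · have h1 : |f z.1 - g z.2| ≤ 2 * max |f z.1| |g z.2| := by
          calc |f z.1 - g z.2| ≤ |f z.1| + |g z.2| := abs_sub _ _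
            _ ≤ max |f z.1| |g z.2| + max |f z.1| |g z.2| :=
                add_le_add (le_max_left _ _) (le_max_right _ _)
            _ = 2 * max |f z.1| |g z.2| := (two_mul _).symm
        calc |f z.1 - g z.2| ^ p ≤ (2 * max |f z.1| |g z.2|) ^ p :=
              Real.rpow_le_rpow (abs_nonneg _) h1 hp0.le
          _ = 2 ^ p * (max |f z.1| |g z.2|) ^ p :=
              Real.mul_rpow (by norm_num) (le_max_of_le_left (abs_nonneg _))
          _ ≤ 2 ^ p * (|f z.1| ^ p + |g z.2| ^ p) :=
              mul_le_mul_of_nonneg_left (max_rpow_le (abs_nonneg _) (abs_nonneg _))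
                (Real.rpow_nonneg (by norm_num) p)
    have hmf : Measurable fun x : (EuclideanSpace ℝ (Fin d)) => ENNReal.ofReal (|f x| ^ p) :=
      (hf.abs.pow measurable_const).ennreal_ofReal
    have hmg : Measurable fun x : (EuclideanSpace ℝ (Fin d)) => ENNReal.ofReal (|g x| ^ p) :=
      (hg.abs.pow measurable_const).ennreal_ofReal
    have heq : ∀ z : (EuclideanSpace ℝ (Fin d)) × (EuclideanSpace ℝ (Fin d)),
        ENNReal.ofReal (2 ^ p * (|f z.1| ^ p + |g z.2| ^ p))
          = ENNReal.ofReal (2 ^ p)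
            * (ENNReal.ofReal (|f z.1| ^ p) + ENNReal.ofReal (|g z.2| ^ p)) := fun z => by
      rw [ENNReal.ofReal_mul (Real.rpow_nonneg (by norm_num) p),
        ENNReal.ofReal_add (Real.rpow_nonneg (abs_nonneg _) p)
          (Real.rpow_nonneg (abs_nonneg _) p)]
    have hintf : ∫⁻ z, ENNReal.ofReal (|f z.1| ^ p) ∂(μ.prod θ)
        = ∫⁻ x, ENNReal.ofReal (|f x| ^ p) ∂μ := by
      conv_rhs => rw [← hmemprod.1]
      rw [lintegral_map hmf measurable_fst]
    have hintg : ∫⁻ z, ENNReal.ofReal (|g z.2| ^ p) ∂(μ.prod θ)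
        = ∫⁻ x, ENNReal.ofReal (|g x| ^ p) ∂θ := by
      conv_rhs => rw [← hmemprod.2]
      rw [lintegral_map hmg measurable_snd]
    have hint : ∫⁻ z, ENNReal.ofReal (‖z.1 - z.2‖ ^ p + |f z.1 - g z.2| ^ p)
        ∂(μ.prod θ) < ⊤ := by
      refine lt_of_le_of_lt (lintegral_mono_ae hptw) ?_
      rw [lintegral_add_left measurable_const]
      simp_rw [heq]
      have hmf1 : Measurable fun z : (EuclideanSpace ℝ (Fin d)) × (EuclideanSpace ℝ (Fin d)) =>
          ENNReal.ofReal (|f z.1| ^ p) := hmf.comp measurable_fst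
      have hmg1 : Measurable fun z : (EuclideanSpace ℝ (Fin d)) × (EuclideanSpace ℝ (Fin d)) =>
          ENNReal.ofReal (|g z.2| ^ p) := hmg.comp measurable_snd
      rw [lintegral_const_mul _ (f := fun z : (EuclideanSpace ℝ (Fin d)) × (EuclideanSpace ℝ (Fin d)) =>
          ENNReal.ofReal (|f z.1| ^ p) + ENNReal.ofReal (|g z.2| ^ p)) (hmf1.add hmg1)]
      rw [lintegral_add_left hmf1]
      rw [hintf, hintg, lintegral_const, measure_univ, mul_one]
      refine ENNReal.add_lt_top.2 ⟨ENNReal.ofReal_lt_top, ?_⟩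
      refine ENNReal.mul_lt_top ENNReal.ofReal_lt_top ?_
      exact ENNReal.add_lt_top.2
        ⟨memLp_lintegral_lt_top hp hfLp, memLp_lintegral_lt_top hp hgLp⟩
    have hfinval : (∫⁻ z, ENNReal.ofReal (‖z.1 - z.2‖ ^ p + |f z.1 - g z.2| ^ p)
        ∂(μ.prod θ)) ^ (1 / p) ≠ ⊤ :=
      (ENNReal.rpow_lt_top_of_nonneg (by positivity) hint.ne).ne
    exact ne_top_of_le_ne_top hfinval (iInf₂_le (μ.prod θ) hmemprod)
  · -- symmetry
    intro μ θ f g hμP hμD hf hfLp hθP hθD hg hgLp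
    exact le_antisymm (symm_le θ μ g f hg hf) (symm_le μ θ f g hf hg)
  · -- triangle inequality
    intro μ θ κm f g h hμP hμD hf hfLp hθP hθD hg hgLp hκP hκD hh hhLp
    haveI := hμP; haveI := hθP; haveI := hκP
    rw [dTL, dTL, dTL]
    refine le_biInf_add_biInf fun π₁ h₁ π₂ h₂ => ?_
    obtain ⟨π, hπ, hle⟩ := triangle_couplings h₁ h₂
      (measurable_pairCost p hf hg) (measurable_pairCost p hg hh)
      (measurable_pairCost p hf hh) hp
      (fun x y z => cost_triangle_pointwise hp f g h x y z)
    exact le_trans (iInf₂_le π hπ) hle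
  · -- vanishing iff equality
    intro μ θ f g hμP hμD hf hfLp hθP hθD hg hgLp
    haveI := hμP; haveI := hθP
    constructor
    · -- dTL = 0 → equal
      intro h0
      have hem : Measurable fun x : (EuclideanSpace ℝ (Fin d)) => (x, f x) := measurable_id.prodMk hf
      have hem' : Measurable fun x : (EuclideanSpace ℝ (Fin d)) => (x, g x) := measurable_id.prodMk hg
      set γ : Measure ((EuclideanSpace ℝ (Fin d)) × ℝ) := μ.map (fun x => (x, f x)) with hγdef
      set γ' : Measure ((EuclideanSpace ℝ (Fin d)) × ℝ) := θ.map (fun x => (x, g x)) with hγ'def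
      haveI : IsProbabilityMeasure γ := Measure.isProbabilityMeasure_map hem.aemeasurable
      haveI : IsProbabilityMeasure γ' := Measure.isProbabilityMeasure_map hem'.aemeasurable
      have hdmeas : Measurable fun z : ((EuclideanSpace ℝ (Fin d)) × ℝ) × ((EuclideanSpace ℝ (Fin d)) × ℝ) =>
          ENNReal.ofReal (dist z.1 z.2 ^ p) :=
        ((continuous_dist.measurable).pow measurable_const).ennreal_ofReal
      have hlift : ∀ δ : ℝ≥0∞, 0 < δ → ∃ π ∈ couplings γ γ',
          ∫⁻ z : ((EuclideanSpace ℝ (Fin d)) × ℝ) × ((EuclideanSpace ℝ (Fin d)) × ℝ), ENNReal.ofReal (dist z.1 z.2 ^ p) ∂π < δ := by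
        intro δ hδ
        obtain ⟨π, hπ, hcost⟩ := exists_coupling_cost_lt hp0 h0 hδ
        set Φ : (EuclideanSpace ℝ (Fin d)) × (EuclideanSpace ℝ (Fin d)) → ((EuclideanSpace ℝ (Fin d)) × ℝ) × ((EuclideanSpace ℝ (Fin d)) × ℝ) :=
          fun z => ((z.1, f z.1), (z.2, g z.2)) with hΦdef
        have hΦ : Measurable Φ :=
          (measurable_fst.prodMk (hf.comp measurable_fst)).prodMk
            (measurable_snd.prodMk (hg.comp measurable_snd))
        refine ⟨π.map Φ, ⟨?_, ?_⟩, ?_⟩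
        · rw [Measure.map_map measurable_fst hΦ]
          have hcomp : (Prod.fst ∘ Φ) = (fun x : (EuclideanSpace ℝ (Fin d)) => (x, f x)) ∘ Prod.fst := rfl
          rw [hcomp, ← Measure.map_map hem measurable_fst, hπ.1]
        · rw [Measure.map_map measurable_snd hΦ]
          have hcomp : (Prod.snd ∘ Φ) = (fun x : (EuclideanSpace ℝ (Fin d)) => (x, g x)) ∘ Prod.snd := rfl
          rw [hcomp, ← Measure.map_map hem' measurable_snd, hπ.2]
        · rw [lintegral_map hdmeas hΦ]
          refine lt_of_le_of_lt (lintegral_mono fun z => ?_) hcost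
          apply ENNReal.ofReal_le_ofReal
          have hd : dist (Φ z).1 (Φ z).2 = max ‖z.1 - z.2‖ |f z.1 - g z.2| := by
            rw [Prod.dist_eq]
            simp [hΦdef, dist_eq_norm, Real.dist_eq]
          rw [hd]
          exact max_rpow_le (norm_nonneg _) (abs_nonneg _)
      have hlift' : ∀ δ : ℝ≥0∞, 0 < δ → ∃ π ∈ couplings γ' γ,
          ∫⁻ z : ((EuclideanSpace ℝ (Fin d)) × ℝ) × ((EuclideanSpace ℝ (Fin d)) × ℝ), ENNReal.ofReal (dist z.1 z.2 ^ p) ∂π < δ := by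
        intro δ hδ
        obtain ⟨π, hπ, hcost⟩ := hlift δ hδ
        refine ⟨π.map Prod.swap, swap_mem_couplings hπ, ?_⟩
        rw [lintegral_map hdmeas measurable_swap]
        refine lt_of_le_of_lt (le_of_eq (lintegral_congr fun z => ?_)) hcost
        simp [dist_comm]
      have hγeq : γ = γ' := by
        refine measures_eq_of_closed fun F hF => ?_
        exact le_antisymm (closed_le_of_couplings hp0 hlift' hF)
          (closed_le_of_couplings hp0 hlift hF)
      have hμθ : μ = θ := by
        have h1 := congrArg (Measure.map Prod.fst) hγeq
        rw [hγdef, hγ'def, Measure.map_map measurable_fst hem,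
          Measure.map_map measurable_fst hem'] at h1
        have h2 : (Prod.fst ∘ fun x : (EuclideanSpace ℝ (Fin d)) => (x, f x)) = id := rfl
        have h3 : (Prod.fst ∘ fun x : (EuclideanSpace ℝ (Fin d)) => (x, g x)) = id := rfl
        rwa [h2, h3, Measure.map_id, Measure.map_id] at h1
      refine ⟨hμθ, ?_⟩
      have hS : MeasurableSet {q : (EuclideanSpace ℝ (Fin d)) × ℝ | q.2 = f q.1} :=
        measurableSet_eq_fun measurable_snd (hf.comp measurable_fst)
      have h1 : γ {q : (EuclideanSpace ℝ (Fin d)) × ℝ | q.2 = f q.1} = 1 := by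
        rw [hγdef, Measure.map_apply hem hS]
        have : ((fun x : (EuclideanSpace ℝ (Fin d)) => (x, f x)) ⁻¹' {q : (EuclideanSpace ℝ (Fin d)) × ℝ | q.2 = f q.1}) = Set.univ := by
          ext x; simp
        rw [this, measure_univ]
      have h2 : θ {x : (EuclideanSpace ℝ (Fin d)) | g x = f x} = 1 := by
        have h3 : γ' {q : (EuclideanSpace ℝ (Fin d)) × ℝ | q.2 = f q.1} = θ {x : (EuclideanSpace ℝ (Fin d)) | g x = f x} := by
          rw [hγ'def, Measure.map_apply hem' hS]
          rfl
        rw [← h3, ← hγeq, h1]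
      have hmeaseq : MeasurableSet {x : (EuclideanSpace ℝ (Fin d)) | g x = f x} := measurableSet_eq_fun hg hf
      rw [hμθ]
      rw [Filter.EventuallyEq, ae_iff]
      have h4 : {x : (EuclideanSpace ℝ (Fin d)) | ¬ f x = g x} = {x : (EuclideanSpace ℝ (Fin d)) | g x = f x}ᶜ := by
        ext x; simp [eq_comm]
      rw [h4, measure_compl hmeaseq (measure_ne_top _ _), h2, measure_univ, tsub_self]
    · -- equal → dTL = 0
      rintro ⟨rfl, hfg⟩
      refine le_antisymm ?_ zero_le
      have hdiag : Measurable fun x : (EuclideanSpace ℝ (Fin d)) => (x, x) := measurable_id.prodMk measurable_id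
      have hmem : μ.map (fun x : (EuclideanSpace ℝ (Fin d)) => (x, x)) ∈ couplings μ μ := by
        constructor
        · rw [Measure.map_map measurable_fst hdiag]
          have : (Prod.fst ∘ fun x : (EuclideanSpace ℝ (Fin d)) => (x, x)) = id := rfl
          rw [this, Measure.map_id]
        · rw [Measure.map_map measurable_snd hdiag]
          have : (Prod.snd ∘ fun x : (EuclideanSpace ℝ (Fin d)) => (x, x)) = id := rfl
          rw [this, Measure.map_id]
      rw [dTL]
      refine le_trans (iInf₂_le (μ.map (fun x : (EuclideanSpace ℝ (Fin d)) => (x, x))) hmem) ?_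
      rw [lintegral_map (measurable_pairCost p hf hg) hdiag]
      have hzero : ∀ᵐ x ∂μ,
          ENNReal.ofReal (‖x - x‖ ^ p + |f x - g x| ^ p) = 0 := by
        refine hfg.mono fun x hx => ?_
        rw [hx]
        simp [Real.zero_rpow hp0.ne']
      rw [lintegral_congr_ae hzero, lintegral_zero,
        ENNReal.zero_rpow_of_pos (by positivity)]


end
end

section
/- Let D ⊂ ℝ^d be open and bounded, 1 ≤ p < ∞, and let μ be a Borel probability measure on D. Let π_n ∈ Γ(μ, μ) be a stagnating sequence of transportation plans, i.e., ∬_{D×D} |x − y| dπ_n(x,y) → 0 as n → ∞. Then for every u ∈ L^p(D, μ), lim_{n→∞} ∬_{D×D} |u(x) − u(y)|^p dπ_n(x,y) = 0. -/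
open MeasureTheory Filter Set ENNReal
open scoped InnerProductSpace NNReal Topology

noncomputable section

private lemma add3_rpow_le {p : ℝ} (hp : 1 ≤ p) {a b c : ℝ}
    (ha : 0 ≤ a) (hb : 0 ≤ b) (hc : 0 ≤ c) :
    (a + b + c) ^ p ≤ 3 ^ p * (a ^ p + b ^ p + c ^ p) := by
  have hp0 : (0:ℝ) ≤ p := le_trans zero_le_one hp
  set m := max a (max b c) with hm
  have hma : a ≤ m := le_max_left _ _
  have hmb : b ≤ m := le_trans (le_max_left _ _) (le_max_right _ _)
  have hmc : c ≤ m := le_trans (le_max_right _ _) (le_max_right _ _)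
  have hm0 : 0 ≤ m := le_trans ha hma
  have h1 : (a + b + c) ^ p ≤ (3 * m) ^ p :=
    Real.rpow_le_rpow (by positivity) (by linarith) hp0
  have h2 : (3 * m) ^ p = 3 ^ p * m ^ p := Real.mul_rpow (by norm_num) hm0
  have h3 : m ^ p ≤ a ^ p + b ^ p + c ^ p := by
    rcases max_choice a (max b c) with h | h
    · have hmp : m ^ p = a ^ p := by rw [hm, h]
      nlinarith [Real.rpow_nonneg hb p, Real.rpow_nonneg hc p]
    · rcases max_choice b c with h' | h'
      · have hmp : m ^ p = b ^ p := by rw [hm, h, h']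
        nlinarith [Real.rpow_nonneg ha p, Real.rpow_nonneg hc p]
      · have hmp : m ^ p = c ^ p := by rw [hm, h, h']
        nlinarith [Real.rpow_nonneg ha p, Real.rpow_nonneg hb p]
  have h3p : (0:ℝ) ≤ 3 ^ p := Real.rpow_nonneg (by norm_num) p
  calc (a + b + c) ^ p ≤ 3 ^ p * m ^ p := by rw [← h2]; exact h1
    _ ≤ 3 ^ p * (a ^ p + b ^ p + c ^ p) := by nlinarith

/-- Lemma 3.8: along a stagnating sequence of self-couplings of `μ`, the `p`-th moments of the
increments of any `L^p(μ)` function tend to zero. -/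
theorem stagnating_plans_increment_tendsto_zero
    {d : ℕ} (D : Set (EuclideanSpace ℝ (Fin d)))
    (hDopen : IsOpen D) (hDbdd : Bornology.IsBounded D)
    (p : ℝ) (hp : 1 ≤ p)
    (μ : Measure (EuclideanSpace ℝ (Fin d)))
    (hμprob : IsProbabilityMeasure μ) (hμD : μ Dᶜ = 0)
    (πs : ℕ → Measure (EuclideanSpace ℝ (Fin d) × EuclideanSpace ℝ (Fin d)))
    (hπ : ∀ n, πs n ∈ couplings μ μ)
    (hstag : Tendsto (fun n => ∫⁻ z, ENNReal.ofReal ‖z.1 - z.2‖ ∂(πs n)) atTop (𝓝 0))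
    (u : EuclideanSpace ℝ (Fin d) → ℝ)
    (hu : Measurable u) (hup : MemLp u (ENNReal.ofReal p) μ) :
    Tendsto (fun n => ∫⁻ z, ENNReal.ofReal (|u z.1 - u z.2| ^ p) ∂(πs n)) atTop (𝓝 0) := by
  have hp0 : (0:ℝ) < p := lt_of_lt_of_le one_pos hp
  rw [ENNReal.tendsto_nhds_zero]
  intro ε hε
  -- reduce to a real target
  obtain ⟨r, hr0, hrε⟩ : ∃ r : ℝ, 0 < r ∧ ENNReal.ofReal r ≤ ε := by
    have hne : min ε 1 ≠ ∞ := ne_top_of_le_ne_top ENNReal.one_ne_top (min_le_right _ _)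
    refine ⟨(min ε 1).toReal, ENNReal.toReal_pos (lt_min hε one_pos).ne' hne, ?_⟩
    rw [ENNReal.ofReal_toReal hne]
    exact min_le_left _ _
  suffices h : ∀ᶠ n in atTop,
      (∫⁻ z, ENNReal.ofReal (|u z.1 - u z.2| ^ p) ∂(πs n)) ≤ ENNReal.ofReal r from
    h.mono fun n hn => hn.trans hrε
  have h3p : (0:ℝ) < 3 ^ p := Real.rpow_pos_of_pos (by norm_num) p
  set s : ℝ := r / (4 * 3 ^ p) with hs_def
  have hs : 0 < s := by positivity
  have hη : (0:ℝ) < s ^ (1/p) := Real.rpow_pos_of_pos hs _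
  have hsp : (s ^ (1/p)) ^ p = s := by
    rw [← Real.rpow_mul hs.le, one_div, inv_mul_cancel₀ hp0.ne', Real.rpow_one]
  -- approximate u by a bounded continuous function
  obtain ⟨g, hg_eLp, hg_mem⟩ :=
    hup.exists_boundedContinuous_eLpNorm_sub_le (ε := ENNReal.ofReal (s ^ (1/p)))
      ENNReal.ofReal_ne_top (ENNReal.ofReal_pos.mpr hη).ne'
  have hgm : Measurable (g : EuclideanSpace ℝ (Fin d) → ℝ) := g.continuous.measurable
  -- the L^p error of the approximation
  have hA : (∫⁻ x, ENNReal.ofReal (|u x - g x| ^ p) ∂μ) ≤ ENNReal.ofReal s := by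
    have hpe : (ENNReal.ofReal p) ≠ 0 := (ENNReal.ofReal_pos.mpr hp0).ne'
    have heq : (∫⁻ x, ENNReal.ofReal (|u x - g x| ^ p) ∂μ)
        = (eLpNorm (u - (g : EuclideanSpace ℝ (Fin d) → ℝ)) (ENNReal.ofReal p) μ) ^ p := by
      rw [eLpNorm_eq_lintegral_rpow_enorm_toReal hpe ENNReal.ofReal_ne_top,
        ENNReal.toReal_ofReal hp0.le, ← ENNReal.rpow_mul, one_div,
        inv_mul_cancel₀ hp0.ne', ENNReal.rpow_one]
      congr 1
      ext x
      rw [Pi.sub_apply, ← ofReal_norm, Real.norm_eq_abs,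
        ENNReal.ofReal_rpow_of_nonneg (abs_nonneg _) hp0.le]
    rw [heq]
    calc (eLpNorm (u - (g : EuclideanSpace ℝ (Fin d) → ℝ)) (ENNReal.ofReal p) μ) ^ p
        ≤ (ENNReal.ofReal (s ^ (1/p))) ^ p := ENNReal.rpow_le_rpow hg_eLp hp0.le
      _ = ENNReal.ofReal s := by
          rw [ENNReal.ofReal_rpow_of_nonneg (Real.rpow_nonneg hs.le _) hp0.le, hsp]
  -- uniform continuity of g on the compact closure of D
  have hK : IsCompact (closure D) := hDbdd.isCompact_closure
  have hgc : UniformContinuousOn g (closure D) :=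
    hK.uniformContinuousOn_of_continuous g.continuous.continuousOn
  obtain ⟨δ, hδ0, hδ⟩ := (Metric.uniformContinuousOn_iff).mp hgc (s ^ (1/p)) hη
  set C : ℝ := (2 * ‖g‖) ^ p / δ with hC_def
  have hC0 : 0 ≤ C := by positivity
  have hmid : ∀ x ∈ D, ∀ y ∈ D, |g x - g y| ^ p ≤ s + C * ‖x - y‖ := by
    intro x hx y hy
    by_cases hxy : dist x y < δ
    · have h1 : |g x - g y| ≤ s ^ (1/p) := by
        have := hδ x (subset_closure hx) y (subset_closure hy) hxy
        rw [Real.dist_eq] at this; linarith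
      have h2 : |g x - g y| ^ p ≤ (s ^ (1/p)) ^ p :=
        Real.rpow_le_rpow (abs_nonneg _) h1 hp0.le
      have h4 : 0 ≤ C * ‖x - y‖ := by positivity
      rw [hsp] at h2; linarith
    · push_neg at hxy
      have hdn : δ ≤ ‖x - y‖ := by rwa [dist_eq_norm] at hxy
      have h1 : |g x - g y| ≤ 2 * ‖g‖ := by
        calc |g x - g y| = ‖g x - g y‖ := (Real.norm_eq_abs _).symm
          _ ≤ ‖g x‖ + ‖g y‖ := norm_sub_le _ _
          _ ≤ ‖g‖ + ‖g‖ := add_le_add (g.norm_coe_le_norm x) (g.norm_coe_le_norm y)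
          _ = 2 * ‖g‖ := by ring
      have h2 : |g x - g y| ^ p ≤ (2 * ‖g‖) ^ p :=
        Real.rpow_le_rpow (abs_nonneg _) h1 hp0.le
      have hge1 : (1:ℝ) ≤ ‖x - y‖ / δ := (one_le_div hδ0).mpr hdn
      have h3 : (2 * ‖g‖) ^ p ≤ (2 * ‖g‖) ^ p * (‖x - y‖ / δ) :=
        le_mul_of_one_le_right (Real.rpow_nonneg (by positivity) p) hge1
      have h4 : (2 * ‖g‖) ^ p * (‖x - y‖ / δ) = C * ‖x - y‖ := by
        rw [hC_def]; ring
      linarith [hs.le]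
  -- eventual smallness of the transport cost
  have hev : ∀ᶠ n in atTop,
      (∫⁻ z, ENNReal.ofReal ‖z.1 - z.2‖ ∂(πs n)) ≤ ENNReal.ofReal (s / (C + 1)) :=
    ENNReal.tendsto_nhds_zero.mp hstag _ (ENNReal.ofReal_pos.mpr (by positivity))
  filter_upwards [hev] with n hn
  obtain ⟨hfst, hsnd⟩ := hπ n
  have hπuniv : πs n Set.univ = 1 := by
    have h1 : (πs n) Set.univ = ((πs n).map Prod.fst) Set.univ := by
      rw [Measure.map_apply measurable_fst MeasurableSet.univ]; rfl
    rw [h1, hfst]; exact measure_univ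
  have haeD1 : ∀ᵐ z ∂(πs n), z.1 ∈ D := by
    rw [ae_iff]
    have h1 : {z : EuclideanSpace ℝ (Fin d) × EuclideanSpace ℝ (Fin d) | ¬ z.1 ∈ D}
        = Prod.fst ⁻¹' Dᶜ := rfl
    rw [h1, ← Measure.map_apply measurable_fst hDopen.measurableSet.compl, hfst]
    exact hμD
  have haeD2 : ∀ᵐ z ∂(πs n), z.2 ∈ D := by
    rw [ae_iff]
    have h1 : {z : EuclideanSpace ℝ (Fin d) × EuclideanSpace ℝ (Fin d) | ¬ z.2 ∈ D}
        = Prod.snd ⁻¹' Dᶜ := rfl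
    rw [h1, ← Measure.map_apply measurable_snd hDopen.measurableSet.compl, hsnd]
    exact hμD
  -- pointwise a.e. bound
  have key : ∀ᵐ z ∂(πs n),
      ENNReal.ofReal (|u z.1 - u z.2| ^ p) ≤
      ENNReal.ofReal (3 ^ p) *
        (ENNReal.ofReal (|u z.1 - g z.1| ^ p) +
          (ENNReal.ofReal s + ENNReal.ofReal C * ENNReal.ofReal ‖z.1 - z.2‖) +
          ENNReal.ofReal (|g z.2 - u z.2| ^ p)) := by
    filter_upwards [haeD1, haeD2] with z h1 h2
    have htri : |u z.1 - u z.2| ≤ |u z.1 - g z.1| + |g z.1 - g z.2| + |g z.2 - u z.2| := by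
      have he : u z.1 - u z.2 = (u z.1 - g z.1) + (g z.1 - g z.2) + (g z.2 - u z.2) := by ring
      rw [he]
      exact (abs_add_le _ _).trans (add_le_add_left (abs_add_le _ _) _)
    have hb1 : |u z.1 - u z.2| ^ p
        ≤ (|u z.1 - g z.1| + |g z.1 - g z.2| + |g z.2 - u z.2|) ^ p :=
      Real.rpow_le_rpow (abs_nonneg _) htri hp0.le
    have hb2 := add3_rpow_le hp (abs_nonneg (u z.1 - g z.1)) (abs_nonneg (g z.1 - g z.2))
      (abs_nonneg (g z.2 - u z.2))
    have hb3 := hmid z.1 h1 z.2 h2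
    have hb3' := mul_le_mul_of_nonneg_left hb3 h3p.le
    have hre : |u z.1 - u z.2| ^ p ≤
        3 ^ p * (|u z.1 - g z.1| ^ p + (s + C * ‖z.1 - z.2‖) + |g z.2 - u z.2| ^ p) := by
      nlinarith [hb1, hb2, hb3']
    calc ENNReal.ofReal (|u z.1 - u z.2| ^ p)
        ≤ ENNReal.ofReal (3 ^ p *
            (|u z.1 - g z.1| ^ p + (s + C * ‖z.1 - z.2‖) + |g z.2 - u z.2| ^ p)) :=
          ENNReal.ofReal_le_ofReal hre
      _ = _ := by
          rw [ENNReal.ofReal_mul h3p.le,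
            ENNReal.ofReal_add (by positivity) (Real.rpow_nonneg (abs_nonneg _) p),
            ENNReal.ofReal_add (Real.rpow_nonneg (abs_nonneg _) p) (by positivity),
            ENNReal.ofReal_add hs.le (by positivity), ENNReal.ofReal_mul hC0]
  -- measurability of the pieces
  have hm1 : Measurable fun z : EuclideanSpace ℝ (Fin d) × EuclideanSpace ℝ (Fin d) =>
      ENNReal.ofReal (|u z.1 - g z.1| ^ p) :=
    (((hu.comp measurable_fst).sub (hgm.comp measurable_fst)).abs.pow
      measurable_const).ennreal_ofReal
  have hm2 : Measurable fun z : EuclideanSpace ℝ (Fin d) × EuclideanSpace ℝ (Fin d) =>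
      ENNReal.ofReal s + ENNReal.ofReal C * ENNReal.ofReal ‖z.1 - z.2‖ :=
    measurable_const.add
      (measurable_const.mul ((measurable_fst.sub measurable_snd).norm.ennreal_ofReal))
  have hm3 : Measurable fun z : EuclideanSpace ℝ (Fin d) × EuclideanSpace ℝ (Fin d) =>
      ENNReal.ofReal (|g z.2 - u z.2| ^ p) :=
    (((hgm.comp measurable_snd).sub (hu.comp measurable_snd)).abs.pow
      measurable_const).ennreal_ofReal
  -- the three integrals
  have hI1 : (∫⁻ z, ENNReal.ofReal (|u z.1 - g z.1| ^ p) ∂(πs n)) ≤ ENNReal.ofReal s := by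
    have he : (∫⁻ z, ENNReal.ofReal (|u z.1 - g z.1| ^ p) ∂(πs n))
        = ∫⁻ x, ENNReal.ofReal (|u x - g x| ^ p) ∂μ := by
      rw [← hfst, lintegral_map (f := fun x => ENNReal.ofReal (|u x - g x| ^ p)) ((hu.sub hgm).abs.pow measurable_const).ennreal_ofReal
        measurable_fst]
    rw [he]; exact hA
  have hI3 : (∫⁻ z, ENNReal.ofReal (|g z.2 - u z.2| ^ p) ∂(πs n)) ≤ ENNReal.ofReal s := by
    have he : (∫⁻ z, ENNReal.ofReal (|g z.2 - u z.2| ^ p) ∂(πs n))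
        = ∫⁻ x, ENNReal.ofReal (|g x - u x| ^ p) ∂μ := by
      rw [← hsnd, lintegral_map (f := fun x => ENNReal.ofReal (|g x - u x| ^ p)) ((hgm.sub hu).abs.pow measurable_const).ennreal_ofReal
        measurable_snd]
    rw [he]
    simp_rw [abs_sub_comm (g _) (u _)]
    exact hA
  have hI2 : (∫⁻ z, (ENNReal.ofReal s + ENNReal.ofReal C * ENNReal.ofReal ‖z.1 - z.2‖) ∂(πs n))
      ≤ ENNReal.ofReal s + ENNReal.ofReal s := by
    rw [lintegral_add_left measurable_const, lintegral_const, hπuniv, mul_one,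
      lintegral_const_mul' _ _ ENNReal.ofReal_ne_top]
    refine add_le_add_right ?_ _
    calc ENNReal.ofReal C * (∫⁻ z, ENNReal.ofReal ‖z.1 - z.2‖ ∂(πs n))
        ≤ ENNReal.ofReal C * ENNReal.ofReal (s / (C + 1)) := by
          exact mul_le_mul_right hn _
      _ = ENNReal.ofReal (C * (s / (C + 1))) := (ENNReal.ofReal_mul hC0).symm
      _ ≤ ENNReal.ofReal s := by
          refine ENNReal.ofReal_le_ofReal ?_
          rw [mul_div_assoc', div_le_iff₀ (by linarith)]
          nlinarith [hs.le, hC0]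
  -- assemble
  calc (∫⁻ z, ENNReal.ofReal (|u z.1 - u z.2| ^ p) ∂(πs n))
      ≤ ∫⁻ z, ENNReal.ofReal (3 ^ p) *
          (ENNReal.ofReal (|u z.1 - g z.1| ^ p) +
            (ENNReal.ofReal s + ENNReal.ofReal C * ENNReal.ofReal ‖z.1 - z.2‖) +
            ENNReal.ofReal (|g z.2 - u z.2| ^ p)) ∂(πs n) := lintegral_mono_ae key
    _ = ENNReal.ofReal (3 ^ p) *
          ∫⁻ z, (ENNReal.ofReal (|u z.1 - g z.1| ^ p) +
            (ENNReal.ofReal s + ENNReal.ofReal C * ENNReal.ofReal ‖z.1 - z.2‖) +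
            ENNReal.ofReal (|g z.2 - u z.2| ^ p)) ∂(πs n) :=
        lintegral_const_mul' _ _ ENNReal.ofReal_ne_top
    _ = ENNReal.ofReal (3 ^ p) *
          ((∫⁻ z, ENNReal.ofReal (|u z.1 - g z.1| ^ p) ∂(πs n)) +
            (∫⁻ z, (ENNReal.ofReal s + ENNReal.ofReal C * ENNReal.ofReal ‖z.1 - z.2‖) ∂(πs n)) +
            (∫⁻ z, ENNReal.ofReal (|g z.2 - u z.2| ^ p) ∂(πs n))) := by
        rw [lintegral_add_right _ hm3, lintegral_add_right _ hm2]
    _ ≤ ENNReal.ofReal (3 ^ p) *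
          (ENNReal.ofReal s + (ENNReal.ofReal s + ENNReal.ofReal s) + ENNReal.ofReal s) := by
        gcongr
    _ = ENNReal.ofReal r := by
        rw [← ENNReal.ofReal_add hs.le hs.le, ← ENNReal.ofReal_add hs.le (by linarith),
          ← ENNReal.ofReal_add (by linarith) hs.le, ← ENNReal.ofReal_mul h3p.le]
        congr 1
        rw [hs_def]
        field_simp
        ring

end
end

section
/- Let D ⊂ ℝ^d be open and bounded and 1 ≤ p < ∞. Suppose μ_n are Borel probability measures on D converging weakly to a Borel probability measure μ on D, let u_n ∈ L^p(D, μ_n) and u ∈ L^p(D, μ), and let π_n ∈ Γ(μ, μ_n) and π̂_n ∈ Γ(μ, μ_n) be two stagnating sequences of transportation plans. Then lim_{n→∞} ∬_{D×D} |u(x) − u_n(y)|^p dπ_n(x,y) = 0 holds if and only if lim_{n→∞} ∬_{D×D} |u(x) − u_n(y)|^p dπ̂_n(x,y) = 0. -/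
open MeasureTheory Filter Set ENNReal
open scoped InnerProductSpace NNReal Topology

noncomputable section

section AuxiliaryLemmas

open ProbabilityTheory

private abbrev Euc (d : ℕ) := EuclideanSpace ℝ (Fin d)

private lemma rpow_tendsto_zero {f : ℕ → ℝ≥0∞} {q : ℝ} (hq : 0 < q)
    (hf : Tendsto f atTop (𝓝 0)) : Tendsto (fun n => f n ^ q) atTop (𝓝 0) := by
  rw [ENNReal.tendsto_atTop_zero] at hf ⊢
  intro ε hε
  rcases eq_or_ne ε ∞ with rfl | htop
  · exact ⟨0, fun n _ => le_top⟩
  obtain ⟨N, hN⟩ := hf (ε ^ (1 / q)) (ENNReal.rpow_pos hε htop)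
  refine ⟨N, fun n hn => ?_⟩
  calc f n ^ q ≤ (ε ^ (1 / q)) ^ q := ENNReal.rpow_le_rpow (hN n hn) hq.le
    _ = ε := by rw [← ENNReal.rpow_mul, one_div, inv_mul_cancel₀ hq.ne', ENNReal.rpow_one]

private lemma glue_exists {E : Type*} [MeasurableSpace E] [StandardBorelSpace E] [Nonempty E]
    (ν : Measure E) [IsFiniteMeasure ν]
    (π π' : Measure (E × E)) [IsFiniteMeasure π] [IsFiniteMeasure π']
    (h2 : π.map Prod.snd = ν) (h2' : π'.map Prod.snd = ν) :
    ∃ τ : Measure (E × (E × E)),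
      τ.map (fun z => (z.2.1, z.1)) = π ∧ τ.map (fun z => (z.2.2, z.1)) = π' := by
  set ρ : Measure (E × E) := π.map Prod.swap with hρ
  set ρ' : Measure (E × E) := π'.map Prod.swap with hρ'
  have hρfst : ρ.fst = ν := by
    rw [hρ, Measure.fst, Measure.map_map measurable_fst measurable_swap]
    exact h2
  have hρ'fst : ρ'.fst = ν := by
    rw [hρ', Measure.fst, Measure.map_map measurable_fst measurable_swap]
    exact h2'
  set κ : Kernel E E := ρ.condKernel with hκ
  set κ' : Kernel E E := ρ'.condKernel with hκ'
  have hswap : ∀ (m : Measure (E × E)), (m.map Prod.swap).map Prod.swap = m := by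
    intro m
    rw [Measure.map_map measurable_swap measurable_swap]
    simp [Function.comp_def]
  have hdis : ν ⊗ₘ κ = ρ := by
    conv_rhs => rw [← ρ.disintegrate ρ.condKernel]
    rw [hρfst]
  have hdis' : ν ⊗ₘ κ' = ρ' := by
    conv_rhs => rw [← ρ'.disintegrate ρ'.condKernel]
    rw [hρ'fst]
  have hm1 : Measurable fun z : E × E × E => (z.1, z.2.1) :=
    measurable_fst.prodMk (measurable_fst.comp measurable_snd)
  have hm2 : Measurable fun z : E × E × E => (z.1, z.2.2) :=
    measurable_fst.prodMk (measurable_snd.comp measurable_snd)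
  refine ⟨ν ⊗ₘ (κ ×ₖ κ'), ?_, ?_⟩
  · have claim1 : (ν ⊗ₘ (κ ×ₖ κ')).map (fun z => (z.1, z.2.1)) = ν ⊗ₘ κ := by
      ext s hs
      rw [Measure.map_apply hm1 hs,
        Measure.compProd_apply (hm1 hs), Measure.compProd_apply hs]
      refine lintegral_congr fun a => ?_
      rw [Kernel.prod_apply]
      have hset : (Prod.mk a ⁻¹' ((fun z : E × E × E => (z.1, z.2.1)) ⁻¹' s))
          = Prod.fst ⁻¹' (Prod.mk a ⁻¹' s) := rfl
      rw [hset, ← Set.prod_univ, Measure.prod_prod, measure_univ, mul_one]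
    have : (ν ⊗ₘ (κ ×ₖ κ')).map (fun z => (z.2.1, z.1))
        = ((ν ⊗ₘ (κ ×ₖ κ')).map (fun z => (z.1, z.2.1))).map Prod.swap := by
      rw [Measure.map_map measurable_swap hm1]
      rfl
    rw [this, claim1, hdis, hρ, hswap]
  · have claim2 : (ν ⊗ₘ (κ ×ₖ κ')).map (fun z => (z.1, z.2.2)) = ν ⊗ₘ κ' := by
      ext s hs
      rw [Measure.map_apply hm2 hs,
        Measure.compProd_apply (hm2 hs), Measure.compProd_apply hs]
      refine lintegral_congr fun a => ?_
      rw [Kernel.prod_apply]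
      have hset : (Prod.mk a ⁻¹' ((fun z : E × E × E => (z.1, z.2.2)) ⁻¹' s))
          = Prod.snd ⁻¹' (Prod.mk a ⁻¹' s) := rfl
      rw [hset, ← Set.univ_prod, Measure.prod_prod, measure_univ, one_mul]
    have : (ν ⊗ₘ (κ ×ₖ κ')).map (fun z => (z.2.2, z.1))
        = ((ν ⊗ₘ (κ ×ₖ κ')).map (fun z => (z.1, z.2.2))).map Prod.swap := by
      rw [Measure.map_map measurable_swap hm2]
      rfl
    rw [this, claim2, hdis', hρ', hswap]

set_option maxHeartbeats 400000 in
private lemma selfplan_tendsto {d : ℕ} (p : ℝ) (hp : 1 ≤ p)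
    (μ : Measure (Euc d)) [IsProbabilityMeasure μ]
    (u : Euc d → ℝ) (hu : Measurable u)
    (hup : MemLp u (ENNReal.ofReal p) μ)
    (γ : ℕ → Measure (Euc d × Euc d))
    (h1 : ∀ n, (γ n).map Prod.fst = μ) (h2 : ∀ n, (γ n).map Prod.snd = μ)
    (hcost : Tendsto (fun n => ∫⁻ z, ENNReal.ofReal ‖z.1 - z.2‖ ∂(γ n)) atTop (𝓝 0)) :
    Tendsto (fun n => ∫⁻ z, (ENNReal.ofReal |u z.1 - u z.2|) ^ p ∂(γ n)) atTop (𝓝 0) := by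
  have hp0 : (0 : ℝ) < p := lt_of_lt_of_le one_pos hp
  have hpne0 : ENNReal.ofReal p ≠ 0 := by
    simp only [ne_eq, ENNReal.ofReal_eq_zero, not_le]; exact hp0
  have hptop : ENNReal.ofReal p ≠ ∞ := ENNReal.ofReal_ne_top
  have key : ∀ f : Euc d → ℝ,
      ∫⁻ x, (ENNReal.ofReal |f x|) ^ p ∂μ = eLpNorm f (ENNReal.ofReal p) μ ^ p := by
    intro f
    rw [eLpNorm_eq_lintegral_rpow_enorm_toReal hpne0 hptop, ENNReal.toReal_ofReal hp0.le,
      ← ENNReal.rpow_mul, one_div, inv_mul_cancel₀ hp0.ne', ENNReal.rpow_one]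
    exact lintegral_congr fun x => by rw [Real.enorm_eq_ofReal_abs]
  have hmarg1 : ∀ n (f : Euc d → ℝ≥0∞), Measurable f →
      ∫⁻ z, f z.1 ∂(γ n) = ∫⁻ x, f x ∂μ := by
    intro n f hf
    rw [← h1 n, lintegral_map hf measurable_fst]
  have hmarg2 : ∀ n (f : Euc d → ℝ≥0∞), Measurable f →
      ∫⁻ z, f z.2 ∂(γ n) = ∫⁻ x, f x ∂μ := by
    intro n f hf
    rw [← h2 n, lintegral_map hf measurable_snd]
  have hγuniv : ∀ n, γ n Set.univ = 1 := by
    intro n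
    have h := h1 n
    have : γ n Set.univ = μ Set.univ := by
      rw [← h, Measure.map_apply measurable_fst MeasurableSet.univ, Set.preimage_univ]
    rw [this, measure_univ]
  rw [ENNReal.tendsto_atTop_zero]
  intro ε hε
  rcases eq_or_ne ε ∞ with rfl | hεtop
  · exact ⟨0, fun n _ => le_top⟩
  set η : ℝ≥0∞ := ε ^ (1 / p) with hη
  have hη0 : 0 < η := ENNReal.rpow_pos hε hεtop
  set δ : ℝ≥0∞ := min (η / 3) 1 with hδ
  have hδpos : 0 < δ := lt_min (ENNReal.div_pos hη0.ne' (by norm_num)) one_pos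
  have hδ0 : δ ≠ 0 := hδpos.ne'
  have hδtop : δ ≠ ∞ := ne_top_of_le_ne_top ENNReal.one_ne_top (min_le_right _ _)
  obtain ⟨g, g_cs, hg_close, g_cont, g_mem⟩ :=
    hup.exists_hasCompactSupport_eLpNorm_sub_le hptop hδ0
  obtain ⟨C, hC⟩ := g_cs.exists_bound_of_continuous g_cont
  have hgu : UniformContinuous g := g_cs.uniformContinuous_of_continuous g_cont
  have hgmeas : Measurable g := g_cont.measurable
  -- the three pieces
  set f1 : Euc d × Euc d → ℝ≥0∞ := fun z => ENNReal.ofReal |u z.1 - g z.1| with hf1def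
  set f2 : Euc d × Euc d → ℝ≥0∞ := fun z => ENNReal.ofReal |g z.1 - g z.2| with hf2def
  set f3 : Euc d × Euc d → ℝ≥0∞ := fun z => ENNReal.ofReal |g z.2 - u z.2| with hf3def
  have hf1 : Measurable f1 := by
    rw [hf1def]; exact ((hu.comp measurable_fst).sub (hgmeas.comp measurable_fst)).abs.ennreal_ofReal
  have hf2 : Measurable f2 := by
    rw [hf2def]; exact ((hgmeas.comp measurable_fst).sub (hgmeas.comp measurable_snd)).abs.ennreal_ofReal
  have hf3 : Measurable f3 := by
    rw [hf3def]; exact ((hgmeas.comp measurable_snd).sub (hu.comp measurable_snd)).abs.ennreal_ofReal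
  -- first and third piece bounds
  have hA : ∀ n, ∫⁻ z, f1 z ^ p ∂(γ n) ≤ δ ^ p := by
    intro n
    calc ∫⁻ z, f1 z ^ p ∂(γ n)
        = ∫⁻ x, (ENNReal.ofReal |u x - g x|) ^ p ∂μ :=
          hmarg1 n (fun x => (ENNReal.ofReal |u x - g x|) ^ p)
            (((hu.sub hgmeas).abs.ennreal_ofReal).pow_const p)
      _ = eLpNorm (u - g) (ENNReal.ofReal p) μ ^ p := key (u - g)
      _ ≤ δ ^ p := ENNReal.rpow_le_rpow hg_close hp0.le
  have hD : ∀ n, ∫⁻ z, f3 z ^ p ∂(γ n) ≤ δ ^ p := by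
    intro n
    calc ∫⁻ z, f3 z ^ p ∂(γ n)
        = ∫⁻ x, (ENNReal.ofReal |g x - u x|) ^ p ∂μ :=
          hmarg2 n (fun x => (ENNReal.ofReal |g x - u x|) ^ p)
            (((hgmeas.sub hu).abs.ennreal_ofReal).pow_const p)
      _ = ∫⁻ x, (ENNReal.ofReal |(u - g) x|) ^ p ∂μ :=
          lintegral_congr fun x => by rw [abs_sub_comm]; rfl
      _ = eLpNorm (u - g) (ENNReal.ofReal p) μ ^ p := key (u - g)
      _ ≤ δ ^ p := ENNReal.rpow_le_rpow hg_close hp0.le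
  -- middle piece tends to zero
  have hM : Tendsto (fun n => ∫⁻ z, f2 z ^ p ∂(γ n)) atTop (𝓝 0) := by
    rw [ENNReal.tendsto_atTop_zero]
    intro ε' hε'
    rcases eq_or_ne ε' ∞ with rfl | hε'top
    · exact ⟨0, fun n _ => le_top⟩
    set r : ℝ := min (ε' / 2).toReal 1 with hr
    have hε'2top : ε' / 2 ≠ ∞ := (ENNReal.div_lt_top hε'top (by norm_num)).ne
    have hr0 : 0 < r := by
      refine lt_min (ENNReal.toReal_pos ?_ hε'2top) one_pos
      simpa using hε'.ne'
    have hofr : ENNReal.ofReal r ≤ ε' / 2 := by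
      refine le_trans (ENNReal.ofReal_le_ofReal (min_le_left _ _)) ?_
      rw [ENNReal.ofReal_toReal hε'2top]
    set εr : ℝ := r ^ (1 / p) with hεr
    have hεr0 : 0 < εr := Real.rpow_pos_of_pos hr0 _
    obtain ⟨δ', hδ'0, hδ'⟩ := Metric.uniformContinuous_iff.mp hgu εr hεr0
    have hSmeas : MeasurableSet {z : Euc d × Euc d | δ' ≤ ‖z.1 - z.2‖} :=
      measurableSet_le measurable_const (measurable_fst.sub measurable_snd).norm
    have hpt : ∀ z : Euc d × Euc d, f2 z ^ p ≤ ENNReal.ofReal r +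
        Set.indicator {z : Euc d × Euc d | δ' ≤ ‖z.1 - z.2‖}
          (fun _ => (ENNReal.ofReal (C + C)) ^ p) z := by
      intro z
      by_cases hz : δ' ≤ ‖z.1 - z.2‖
      · rw [Set.indicator_of_mem (show z ∈ {z : Euc d × Euc d | δ' ≤ ‖z.1 - z.2‖} from hz)]
        have hb : f2 z ≤ ENNReal.ofReal (C + C) := by
          rw [hf2def]
          refine ENNReal.ofReal_le_ofReal ?_
          calc |g z.1 - g z.2| ≤ |g z.1| + |g z.2| := abs_sub _ _
            _ ≤ C + C := by
                refine add_le_add ?_ ?_ <;> · rw [← Real.norm_eq_abs]; exact hC _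
        exact le_add_self.trans' (ENNReal.rpow_le_rpow hb hp0.le)
      · rw [Set.indicator_of_notMem
          (show z ∉ {z : Euc d × Euc d | δ' ≤ ‖z.1 - z.2‖} from hz), add_zero]
        have hd : dist (g z.1) (g z.2) < εr := hδ' (by rw [dist_eq_norm]; exact lt_of_not_ge hz)
        have hb : f2 z ≤ ENNReal.ofReal εr := by
          rw [hf2def]
          exact ENNReal.ofReal_le_ofReal (by rw [← Real.dist_eq]; exact hd.le)
        calc f2 z ^ p ≤ (ENNReal.ofReal εr) ^ p := ENNReal.rpow_le_rpow hb hp0.le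
          _ = ENNReal.ofReal (εr ^ p) := ENNReal.ofReal_rpow_of_nonneg hεr0.le hp0.le
          _ = ENNReal.ofReal r := by
              rw [hεr, ← Real.rpow_mul hr0.le, one_div, inv_mul_cancel₀ hp0.ne', Real.rpow_one]
    have hbound : ∀ n, ∫⁻ z, f2 z ^ p ∂(γ n) ≤ ENNReal.ofReal r +
        (ENNReal.ofReal (C + C)) ^ p * γ n {z : Euc d × Euc d | δ' ≤ ‖z.1 - z.2‖} := by
      intro n
      calc ∫⁻ z, f2 z ^ p ∂(γ n)
          ≤ ∫⁻ z, (ENNReal.ofReal r + Set.indicator {z : Euc d × Euc d | δ' ≤ ‖z.1 - z.2‖}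
              (fun _ => (ENNReal.ofReal (C + C)) ^ p) z) ∂(γ n) := lintegral_mono hpt
        _ = ENNReal.ofReal r * γ n Set.univ +
            ∫⁻ z, Set.indicator {z : Euc d × Euc d | δ' ≤ ‖z.1 - z.2‖}
              (fun _ => (ENNReal.ofReal (C + C)) ^ p) z ∂(γ n) := by
            rw [lintegral_add_left measurable_const, lintegral_const]
        _ = ENNReal.ofReal r +
            (ENNReal.ofReal (C + C)) ^ p * γ n {z : Euc d × Euc d | δ' ≤ ‖z.1 - z.2‖} := by
            rw [hγuniv n, mul_one, lintegral_indicator hSmeas, setLIntegral_const]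
    have hmarkov : ∀ n, γ n {z : Euc d × Euc d | δ' ≤ ‖z.1 - z.2‖} ≤
        (∫⁻ z, ENNReal.ofReal ‖z.1 - z.2‖ ∂(γ n)) / ENNReal.ofReal δ' := by
      intro n
      have hseteq : {z : Euc d × Euc d | δ' ≤ ‖z.1 - z.2‖}
          = {z : Euc d × Euc d | ENNReal.ofReal δ' ≤ ENNReal.ofReal ‖z.1 - z.2‖} := by
        ext z
        simp only [Set.mem_setOf_eq, ENNReal.ofReal_le_ofReal_iff (norm_nonneg _)]
      rw [hseteq]
      exact meas_ge_le_lintegral_div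
        ((measurable_fst.sub measurable_snd).norm.ennreal_ofReal).aemeasurable
        (ENNReal.ofReal_pos.2 hδ'0).ne' ENNReal.ofReal_ne_top
    have hconst_ne_top : (ENNReal.ofReal (C + C)) ^ p / ENNReal.ofReal δ' ≠ ∞ :=
      (ENNReal.div_lt_top (ENNReal.rpow_ne_top_of_nonneg hp0.le ENNReal.ofReal_ne_top)
        (ENNReal.ofReal_pos.2 hδ'0).ne').ne
    have htend := ENNReal.Tendsto.const_mul hcost (Or.inr hconst_ne_top)
    rw [mul_zero, ENNReal.tendsto_atTop_zero] at htend
    obtain ⟨N, hN⟩ := htend (ε' / 2) (ENNReal.div_pos hε'.ne' (by norm_num))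
    refine ⟨N, fun n hn => ?_⟩
    calc ∫⁻ z, f2 z ^ p ∂(γ n)
        ≤ ENNReal.ofReal r + (ENNReal.ofReal (C + C)) ^ p *
            γ n {z : Euc d × Euc d | δ' ≤ ‖z.1 - z.2‖} := hbound n
      _ ≤ ENNReal.ofReal r + (ENNReal.ofReal (C + C)) ^ p *
            ((∫⁻ z, ENNReal.ofReal ‖z.1 - z.2‖ ∂(γ n)) / ENNReal.ofReal δ') := by
          gcongr
          exact hmarkov n
      _ = ENNReal.ofReal r + ((ENNReal.ofReal (C + C)) ^ p / ENNReal.ofReal δ') *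
            (∫⁻ z, ENNReal.ofReal ‖z.1 - z.2‖ ∂(γ n)) := by
          rw [div_eq_mul_inv, div_eq_mul_inv]
          ring
      _ ≤ ε' / 2 + ε' / 2 := add_le_add hofr (hN n hn)
      _ = ε' := ENNReal.add_halves ε'
  -- assemble
  have hδp_pos : 0 < δ ^ p := ENNReal.rpow_pos hδpos hδtop
  rw [ENNReal.tendsto_atTop_zero] at hM
  obtain ⟨N, hN⟩ := hM (δ ^ p) hδp_pos
  refine ⟨N, fun n hn => ?_⟩
  have tri : ∀ z : Euc d × Euc d,
      ENNReal.ofReal |u z.1 - u z.2| ≤ f1 z + f2 z + f3 z := by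
    intro z
    calc ENNReal.ofReal |u z.1 - u z.2|
        ≤ ENNReal.ofReal (|u z.1 - g z.1| + |g z.1 - g z.2| + |g z.2 - u z.2|) := by
          refine ENNReal.ofReal_le_ofReal ?_
          calc |u z.1 - u z.2| ≤ |u z.1 - g z.1| + |g z.1 - u z.2| := abs_sub_le _ _ _
            _ ≤ |u z.1 - g z.1| + (|g z.1 - g z.2| + |g z.2 - u z.2|) := by
                gcongr
                exact abs_sub_le _ _ _
            _ = |u z.1 - g z.1| + |g z.1 - g z.2| + |g z.2 - u z.2| := (add_assoc _ _ _).symm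
      _ = f1 z + f2 z + f3 z := by
          rw [hf1def, hf2def, hf3def]
          rw [ENNReal.ofReal_add (by positivity) (abs_nonneg _),
            ENNReal.ofReal_add (abs_nonneg _) (abs_nonneg _)]
  have step1 : (∫⁻ z, (ENNReal.ofReal |u z.1 - u z.2|) ^ p ∂(γ n)) ^ (1 / p) ≤ δ + δ + δ := by
    calc (∫⁻ z, (ENNReal.ofReal |u z.1 - u z.2|) ^ p ∂(γ n)) ^ (1 / p)
        ≤ (∫⁻ z, (f1 z + f2 z + f3 z) ^ p ∂(γ n)) ^ (1 / p) := by
          refine ENNReal.rpow_le_rpow (lintegral_mono fun z => ?_) (by positivity)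
          exact ENNReal.rpow_le_rpow (tri z) hp0.le
      _ ≤ (∫⁻ z, (f1 z + f2 z) ^ p ∂(γ n)) ^ (1 / p) + (∫⁻ z, f3 z ^ p ∂(γ n)) ^ (1 / p) :=
          ENNReal.lintegral_Lp_add_le (hf1.add hf2).aemeasurable hf3.aemeasurable hp
      _ ≤ ((∫⁻ z, f1 z ^ p ∂(γ n)) ^ (1 / p) + (∫⁻ z, f2 z ^ p ∂(γ n)) ^ (1 / p)) +
            (∫⁻ z, f3 z ^ p ∂(γ n)) ^ (1 / p) :=
          add_le_add_left (ENNReal.lintegral_Lp_add_le hf1.aemeasurable hf2.aemeasurable hp) _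
      _ ≤ ((δ ^ p) ^ (1 / p) + (δ ^ p) ^ (1 / p)) + (δ ^ p) ^ (1 / p) := by
          refine add_le_add (add_le_add ?_ ?_) ?_ <;> refine ENNReal.rpow_le_rpow ?_ (by positivity)
          · exact hA n
          · exact hN n hn
          · exact hD n
      _ = δ + δ + δ := by
          rw [← ENNReal.rpow_mul, mul_one_div, div_self hp0.ne', ENNReal.rpow_one]
  have h3δ : δ + δ + δ ≤ η := by
    have hδle : δ ≤ η / 3 := min_le_left _ _
    calc δ + δ + δ ≤ η / 3 + η / 3 + η / 3 := add_le_add (add_le_add hδle hδle) hδle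
      _ = 3 * (η / 3) := by
          rw [show (3 : ℝ≥0∞) = 1 + 1 + 1 by norm_num, add_mul, add_mul, one_mul]
      _ ≤ η := ENNReal.mul_div_le
  have hrepr : (∫⁻ z, (ENNReal.ofReal |u z.1 - u z.2|) ^ p ∂(γ n))
      = ((∫⁻ z, (ENNReal.ofReal |u z.1 - u z.2|) ^ p ∂(γ n)) ^ (1 / p)) ^ p := by
    rw [← ENNReal.rpow_mul, one_div, inv_mul_cancel₀ hp0.ne', ENNReal.rpow_one]
  calc (∫⁻ z, (ENNReal.ofReal |u z.1 - u z.2|) ^ p ∂(γ n))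
      = ((∫⁻ z, (ENNReal.ofReal |u z.1 - u z.2|) ^ p ∂(γ n)) ^ (1 / p)) ^ p := hrepr
    _ ≤ (δ + δ + δ) ^ p := ENNReal.rpow_le_rpow step1 hp0.le
    _ ≤ η ^ p := ENNReal.rpow_le_rpow h3δ hp0.le
    _ = ε := by rw [hη, ← ENNReal.rpow_mul, one_div, inv_mul_cancel₀ hp0.ne', ENNReal.rpow_one]

private lemma one_direction {d : ℕ} (p : ℝ) (hp : 1 ≤ p)
    (μ : Measure (Euc d)) (hμprob : IsProbabilityMeasure μ)
    (μs : ℕ → Measure (Euc d)) (hμs : ∀ n, IsProbabilityMeasure (μs n))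
    (us : ℕ → Euc d → ℝ) (hus : ∀ n, Measurable (us n))
    (u : Euc d → ℝ) (hu : Measurable u) (hup : MemLp u (ENNReal.ofReal p) μ)
    (πs πs' : ℕ → Measure (Euc d × Euc d))
    (hπ1 : ∀ n, (πs n).map Prod.fst = μ) (hπ2 : ∀ n, (πs n).map Prod.snd = μs n)
    (hπ'1 : ∀ n, (πs' n).map Prod.fst = μ) (hπ'2 : ∀ n, (πs' n).map Prod.snd = μs n)
    (hstag : Tendsto (fun n => ∫⁻ z, ENNReal.ofReal ‖z.1 - z.2‖ ∂(πs n)) atTop (𝓝 0))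
    (hstag' : Tendsto (fun n => ∫⁻ z, ENNReal.ofReal ‖z.1 - z.2‖ ∂(πs' n)) atTop (𝓝 0))
    (hA : Tendsto (fun n => ∫⁻ z, ENNReal.ofReal (|u z.1 - us n z.2| ^ p) ∂(πs n)) atTop (𝓝 0)) :
    Tendsto (fun n => ∫⁻ z, ENNReal.ofReal (|u z.1 - us n z.2| ^ p) ∂(πs' n)) atTop (𝓝 0) := by
  have hp0 : (0 : ℝ) < p := lt_of_lt_of_le one_pos hp
  have hconv : ∀ a : ℝ, ENNReal.ofReal (|a| ^ p) = (ENNReal.ofReal |a|) ^ p :=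
    fun a => (ENNReal.ofReal_rpow_of_nonneg (abs_nonneg a) hp0.le).symm
  haveI := hμprob
  have hπprob : ∀ n, IsProbabilityMeasure (πs n) := by
    intro n
    constructor
    have h : (πs n) Set.univ = μ Set.univ := by
      rw [← hπ1 n, Measure.map_apply measurable_fst MeasurableSet.univ, Set.preimage_univ]
    rw [h, measure_univ]
  have hπ'prob : ∀ n, IsProbabilityMeasure (πs' n) := by
    intro n
    constructor
    have h : (πs' n) Set.univ = μ Set.univ := by
      rw [← hπ'1 n, Measure.map_apply measurable_fst MeasurableSet.univ, Set.preimage_univ]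
    rw [h, measure_univ]
  have hglue : ∀ n, ∃ τ : Measure (Euc d × (Euc d × Euc d)),
      τ.map (fun z => (z.2.1, z.1)) = πs n ∧ τ.map (fun z => (z.2.2, z.1)) = πs' n := by
    intro n
    haveI := hπprob n; haveI := hπ'prob n; haveI := hμs n
    exact glue_exists (μs n) (πs n) (πs' n) (hπ2 n) (hπ'2 n)
  choose τ hτ1 hτ2 using hglue
  have hm1 : Measurable fun z : Euc d × Euc d × Euc d => (z.2.1, z.1) :=
    (measurable_fst.comp measurable_snd).prodMk measurable_fst
  have hm2 : Measurable fun z : Euc d × Euc d × Euc d => (z.2.2, z.1) :=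
    (measurable_snd.comp measurable_snd).prodMk measurable_fst
  have hmγ : Measurable fun z : Euc d × Euc d × Euc d => (z.2.1, z.2.2) :=
    (measurable_fst.comp measurable_snd).prodMk (measurable_snd.comp measurable_snd)
  set γ : ℕ → Measure (Euc d × Euc d) :=
    fun n => (τ n).map (fun z => (z.2.1, z.2.2)) with hγdef
  have hLπ : ∀ n (F : Euc d × Euc d → ℝ≥0∞), Measurable F →
      ∫⁻ z, F (z.2.1, z.1) ∂(τ n) = ∫⁻ w, F w ∂(πs n) := fun n F hF => by
    rw [← hτ1 n, lintegral_map hF hm1]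
  have hLπ' : ∀ n (F : Euc d × Euc d → ℝ≥0∞), Measurable F →
      ∫⁻ z, F (z.2.2, z.1) ∂(τ n) = ∫⁻ w, F w ∂(πs' n) := fun n F hF => by
    rw [← hτ2 n, lintegral_map hF hm2]
  have hLγ : ∀ n (F : Euc d × Euc d → ℝ≥0∞), Measurable F →
      ∫⁻ z, F (z.2.1, z.2.2) ∂(τ n) = ∫⁻ w, F w ∂(γ n) := fun n F hF => by
    rw [hγdef]
    exact (lintegral_map hF hmγ).symm
  have hγ1 : ∀ n, (γ n).map Prod.fst = μ := by
    intro n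
    rw [hγdef]
    simp only []
    rw [Measure.map_map measurable_fst hmγ]
    have h : (Prod.fst ∘ fun z : Euc d × Euc d × Euc d => (z.2.1, z.2.2))
        = Prod.fst ∘ (fun z : Euc d × Euc d × Euc d => (z.2.1, z.1)) := rfl
    rw [h, ← Measure.map_map measurable_fst hm1, hτ1 n, hπ1 n]
  have hγ2 : ∀ n, (γ n).map Prod.snd = μ := by
    intro n
    rw [hγdef]
    simp only []
    rw [Measure.map_map measurable_snd hmγ]
    have h : (Prod.snd ∘ fun z : Euc d × Euc d × Euc d => (z.2.1, z.2.2))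
        = Prod.fst ∘ (fun z : Euc d × Euc d × Euc d => (z.2.2, z.1)) := rfl
    rw [h, ← Measure.map_map measurable_fst hm2, hτ2 n, hπ'1 n]
  have hnorm : Measurable fun w : Euc d × Euc d => ENNReal.ofReal ‖w.1 - w.2‖ :=
    (measurable_fst.sub measurable_snd).norm.ennreal_ofReal
  have hγcost : Tendsto (fun n => ∫⁻ z, ENNReal.ofReal ‖z.1 - z.2‖ ∂(γ n)) atTop (𝓝 0) := by
    have hub : ∀ n, ∫⁻ z, ENNReal.ofReal ‖z.1 - z.2‖ ∂(γ n) ≤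
        (∫⁻ z, ENNReal.ofReal ‖z.1 - z.2‖ ∂(πs n)) +
        (∫⁻ z, ENNReal.ofReal ‖z.1 - z.2‖ ∂(πs' n)) := by
      intro n
      have e1 : ∫⁻ z, ENNReal.ofReal ‖z.1 - z.2‖ ∂(γ n)
          = ∫⁻ z, ENNReal.ofReal ‖z.2.1 - z.2.2‖ ∂(τ n) := (hLγ n _ hnorm).symm
      rw [e1]
      have hφm : Measurable fun z : Euc d × Euc d × Euc d => ENNReal.ofReal ‖z.2.1 - z.1‖ :=
        ((measurable_fst.comp measurable_snd).sub measurable_fst).norm.ennreal_ofReal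
      calc ∫⁻ z, ENNReal.ofReal ‖z.2.1 - z.2.2‖ ∂(τ n)
          ≤ ∫⁻ z, (ENNReal.ofReal ‖z.2.1 - z.1‖ + ENNReal.ofReal ‖z.2.2 - z.1‖) ∂(τ n) := by
            refine lintegral_mono fun z => ?_
            rw [← ENNReal.ofReal_add (norm_nonneg _) (norm_nonneg _)]
            refine ENNReal.ofReal_le_ofReal ?_
            have h := dist_triangle z.2.1 z.1 z.2.2
            rw [dist_eq_norm, dist_eq_norm, dist_eq_norm] at h
            calc ‖z.2.1 - z.2.2‖ ≤ ‖z.2.1 - z.1‖ + ‖z.1 - z.2.2‖ := h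
              _ = ‖z.2.1 - z.1‖ + ‖z.2.2 - z.1‖ := by rw [norm_sub_rev z.1]
        _ = (∫⁻ z, ENNReal.ofReal ‖z.2.1 - z.1‖ ∂(τ n)) +
            (∫⁻ z, ENNReal.ofReal ‖z.2.2 - z.1‖ ∂(τ n)) := lintegral_add_left hφm _
        _ = (∫⁻ z, ENNReal.ofReal ‖z.1 - z.2‖ ∂(πs n)) +
            (∫⁻ z, ENNReal.ofReal ‖z.1 - z.2‖ ∂(πs' n)) := by
            rw [hLπ n _ hnorm, hLπ' n _ hnorm]
    have hsum : Tendsto (fun n => (∫⁻ z, ENNReal.ofReal ‖z.1 - z.2‖ ∂(πs n)) +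
        (∫⁻ z, ENNReal.ofReal ‖z.1 - z.2‖ ∂(πs' n))) atTop (𝓝 0) := by
      simpa using hstag.add hstag'
    exact tendsto_of_tendsto_of_tendsto_of_le_of_le tendsto_const_nhds hsum
      (fun n => bot_le) hub
  have hC := selfplan_tendsto p hp μ u hu hup γ hγ1 hγ2 hγcost
  have hAeq : (fun n => ∫⁻ z, ENNReal.ofReal (|u z.1 - us n z.2| ^ p) ∂(πs n))
      = fun n => ∫⁻ z, (ENNReal.ofReal |u z.1 - us n z.2|) ^ p ∂(πs n) :=
    funext fun n => lintegral_congr fun z => hconv _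
  rw [hAeq] at hA
  have hBeq : (fun n => ∫⁻ z, ENNReal.ofReal (|u z.1 - us n z.2| ^ p) ∂(πs' n))
      = fun n => ∫⁻ z, (ENNReal.ofReal |u z.1 - us n z.2|) ^ p ∂(πs' n) :=
    funext fun n => lintegral_congr fun z => hconv _
  rw [hBeq]
  have hkey : ∀ n, (∫⁻ z, (ENNReal.ofReal |u z.1 - us n z.2|) ^ p ∂(πs' n)) ≤
      ((∫⁻ z, (ENNReal.ofReal |u z.1 - us n z.2|) ^ p ∂(πs n)) ^ (1 / p) +
       (∫⁻ z, (ENNReal.ofReal |u z.1 - u z.2|) ^ p ∂(γ n)) ^ (1 / p)) ^ p := by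
    intro n
    have hFm : Measurable fun w : Euc d × Euc d => (ENNReal.ofReal |u w.1 - us n w.2|) ^ p :=
      (((hu.comp measurable_fst).sub ((hus n).comp measurable_snd)).abs.ennreal_ofReal).pow_const p
    have hGm : Measurable fun w : Euc d × Euc d => (ENNReal.ofReal |u w.2 - u w.1|) ^ p :=
      (((hu.comp measurable_snd).sub (hu.comp measurable_fst)).abs.ennreal_ofReal).pow_const p
    have hφ : Measurable fun z : Euc d × Euc d × Euc d =>
        ENNReal.ofReal |u z.2.1 - us n z.1| :=
      ((hu.comp (measurable_fst.comp measurable_snd)).sub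
        ((hus n).comp measurable_fst)).abs.ennreal_ofReal
    have hψ : Measurable fun z : Euc d × Euc d × Euc d =>
        ENNReal.ofReal |u z.2.2 - u z.2.1| :=
      ((hu.comp (measurable_snd.comp measurable_snd)).sub
        (hu.comp (measurable_fst.comp measurable_snd))).abs.ennreal_ofReal
    have hBτ : (∫⁻ z, (ENNReal.ofReal |u z.1 - us n z.2|) ^ p ∂(πs' n))
        = ∫⁻ z, (ENNReal.ofReal |u z.2.2 - us n z.1|) ^ p ∂(τ n) :=
      (hLπ' n (fun w => (ENNReal.ofReal |u w.1 - us n w.2|) ^ p) hFm).symm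
    have hAτ : ∫⁻ z, (ENNReal.ofReal |u z.2.1 - us n z.1|) ^ p ∂(τ n)
        = ∫⁻ z, (ENNReal.ofReal |u z.1 - us n z.2|) ^ p ∂(πs n) :=
      hLπ n (fun w => (ENNReal.ofReal |u w.1 - us n w.2|) ^ p) hFm
    have hCτ : ∫⁻ z, (ENNReal.ofReal |u z.2.2 - u z.2.1|) ^ p ∂(τ n)
        = ∫⁻ z, (ENNReal.ofReal |u z.1 - u z.2|) ^ p ∂(γ n) := by
      rw [hLγ n (fun w => (ENNReal.ofReal |u w.2 - u w.1|) ^ p) hGm]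
      exact lintegral_congr fun w => by rw [abs_sub_comm]
    calc (∫⁻ z, (ENNReal.ofReal |u z.1 - us n z.2|) ^ p ∂(πs' n))
        = ∫⁻ z, (ENNReal.ofReal |u z.2.2 - us n z.1|) ^ p ∂(τ n) := hBτ
      _ ≤ ∫⁻ z, (ENNReal.ofReal |u z.2.1 - us n z.1|
            + ENNReal.ofReal |u z.2.2 - u z.2.1|) ^ p ∂(τ n) := by
          refine lintegral_mono fun z => ENNReal.rpow_le_rpow ?_ hp0.le
          rw [← ENNReal.ofReal_add (abs_nonneg _) (abs_nonneg _)]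
          refine ENNReal.ofReal_le_ofReal ?_
          calc |u z.2.2 - us n z.1| ≤ |u z.2.2 - u z.2.1| + |u z.2.1 - us n z.1| :=
                abs_sub_le _ _ _
            _ = |u z.2.1 - us n z.1| + |u z.2.2 - u z.2.1| := add_comm _ _
      _ = ((∫⁻ z, (ENNReal.ofReal |u z.2.1 - us n z.1|
            + ENNReal.ofReal |u z.2.2 - u z.2.1|) ^ p ∂(τ n)) ^ (1 / p)) ^ p := by
          rw [← ENNReal.rpow_mul, one_div, inv_mul_cancel₀ hp0.ne', ENNReal.rpow_one]
      _ ≤ ((∫⁻ z, (ENNReal.ofReal |u z.1 - us n z.2|) ^ p ∂(πs n)) ^ (1 / p) +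
           (∫⁻ z, (ENNReal.ofReal |u z.1 - u z.2|) ^ p ∂(γ n)) ^ (1 / p)) ^ p := by
          refine ENNReal.rpow_le_rpow ?_ hp0.le
          calc (∫⁻ z, (ENNReal.ofReal |u z.2.1 - us n z.1|
                + ENNReal.ofReal |u z.2.2 - u z.2.1|) ^ p ∂(τ n)) ^ (1 / p)
              ≤ (∫⁻ z, (ENNReal.ofReal |u z.2.1 - us n z.1|) ^ p ∂(τ n)) ^ (1 / p) +
                (∫⁻ z, (ENNReal.ofReal |u z.2.2 - u z.2.1|) ^ p ∂(τ n)) ^ (1 / p) :=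
                ENNReal.lintegral_Lp_add_le hφ.aemeasurable hψ.aemeasurable hp
            _ = _ := by rw [hAτ, hCτ]
  have hRHS : Tendsto (fun n =>
      ((∫⁻ z, (ENNReal.ofReal |u z.1 - us n z.2|) ^ p ∂(πs n)) ^ (1 / p) +
       (∫⁻ z, (ENNReal.ofReal |u z.1 - u z.2|) ^ p ∂(γ n)) ^ (1 / p)) ^ p) atTop (𝓝 0) := by
    have h1 := rpow_tendsto_zero (by positivity : (0:ℝ) < 1 / p) hA
    have h2 := rpow_tendsto_zero (by positivity : (0:ℝ) < 1 / p) hC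
    exact rpow_tendsto_zero hp0 (by simpa using h1.add h2)
  exact tendsto_of_tendsto_of_tendsto_of_le_of_le tendsto_const_nhds hRHS
    (fun n => bot_le) hkey

end AuxiliaryLemmas

/-- Lemma 3.9: for two stagnating sequences of plans between `μ` and `μ_n`, convergence of the
`p`-th transport discrepancy along one sequence is equivalent to convergence along the other. -/
theorem stagnating_plans_equivalence
    {d : ℕ} (D : Set (EuclideanSpace ℝ (Fin d)))
    (hDopen : IsOpen D) (hDbdd : Bornology.IsBounded D)
    (p : ℝ) (hp : 1 ≤ p)
    (μ : Measure (EuclideanSpace ℝ (Fin d)))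
    (hμprob : IsProbabilityMeasure μ) (hμD : μ Dᶜ = 0)
    (μs : ℕ → Measure (EuclideanSpace ℝ (Fin d)))
    (hμs : ∀ n, IsProbabilityMeasure (μs n) ∧ (μs n) Dᶜ = 0)
    -- weak convergence of `μ_n` to `μ`
    (hweak : ∀ g : BoundedContinuousFunction (EuclideanSpace ℝ (Fin d)) ℝ,
      Tendsto (fun n => ∫ x, g x ∂(μs n)) atTop (𝓝 (∫ x, g x ∂μ)))
    (us : ℕ → EuclideanSpace ℝ (Fin d) → ℝ)
    (hus : ∀ n, Measurable (us n) ∧ MemLp (us n) (ENNReal.ofReal p) (μs n))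
    (u : EuclideanSpace ℝ (Fin d) → ℝ)
    (hu : Measurable u) (hup : MemLp u (ENNReal.ofReal p) μ)
    (πs πs' : ℕ → Measure (EuclideanSpace ℝ (Fin d) × EuclideanSpace ℝ (Fin d)))
    (hπ : ∀ n, πs n ∈ couplings μ (μs n)) (hπ' : ∀ n, πs' n ∈ couplings μ (μs n))
    (hstag : Tendsto (fun n => ∫⁻ z, ENNReal.ofReal ‖z.1 - z.2‖ ∂(πs n)) atTop (𝓝 0))
    (hstag' : Tendsto (fun n => ∫⁻ z, ENNReal.ofReal ‖z.1 - z.2‖ ∂(πs' n)) atTop (𝓝 0)) :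
    Tendsto (fun n => ∫⁻ z, ENNReal.ofReal (|u z.1 - us n z.2| ^ p) ∂(πs n)) atTop (𝓝 0) ↔
      Tendsto (fun n => ∫⁻ z, ENNReal.ofReal (|u z.1 - us n z.2| ^ p) ∂(πs' n)) atTop (𝓝 0) := by
  have hmem := fun n => hπ n
  have hmem' := fun n => hπ' n
  simp only [couplings, Set.mem_setOf_eq] at hmem hmem'
  constructor
  · intro h
    exact one_direction p hp μ hμprob μs (fun n => (hμs n).1) us (fun n => (hus n).1)
      u hu hup πs πs' (fun n => (hmem n).1) (fun n => (hmem n).2)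
      (fun n => (hmem' n).1) (fun n => (hmem' n).2) hstag hstag' h
  · intro h
    exact one_direction p hp μ hμprob μs (fun n => (hμs n).1) us (fun n => (hus n).1)
      u hu hup πs' πs (fun n => (hmem' n).1) (fun n => (hmem' n).2)
      (fun n => (hmem n).1) (fun n => (hmem n).2) hstag' hstag h

end
end

section
/- Let D ⊂ ℝ^d be open and bounded with Lebesgue measure equal to 1, let μ be the Lebesgue measure on D (a probability measure), and let 1 ≤ p < ∞. Let f_n be a sequence in L^p(D, μ) and f ∈ L^p(D, μ). Then f_n → f in L^p(D, μ) if and only if the graphs of f_n converge to the graph of f in the p-transportation sense, i.e., 𝐝_p((Id × f_n)_# μ, (Id × f)_# μ) → 0 as n → ∞. -/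
open MeasureTheory Filter Set ENNReal
open scoped InnerProductSpace NNReal Topology

noncomputable section

section AuxCor313

variable {α : Type*} [MeasurableSpace α] [NormedAddCommGroup α] [BorelSpace α]
  [SecondCountableTopology α]

private lemma measurable_costFn {p : ℝ} (hp : 0 ≤ p) :
    Measurable (fun z : (α × ℝ) × (α × ℝ) =>
      ENNReal.ofReal (‖z.1.1 - z.2.1‖ ^ p + |z.1.2 - z.2.2| ^ p)) := by
  apply Measurable.ennreal_ofReal
  exact (((Real.continuous_rpow_const hp).measurable).comp
      (measurable_fst.fst.sub measurable_snd.fst).norm).add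
    (((Real.continuous_rpow_const hp).measurable).comp
      (measurable_fst.snd.sub measurable_snd.snd).abs)

private lemma dProd_le_lintegral {p : ℝ} (hp : 1 ≤ p) (μ : Measure α)
    {u v : α → ℝ} (hu : Measurable u) (hv : Measurable v) :
    dProd p (μ.map fun x => (x, u x)) (μ.map fun x => (x, v x)) ≤
      (∫⁻ x, ENNReal.ofReal (|u x - v x| ^ p) ∂μ) ^ (1 / p) := by
  have hp0 : (0 : ℝ) < p := lt_of_lt_of_le one_pos hp
  set T : α → (α × ℝ) × (α × ℝ) := fun x => ((x, u x), (x, v x)) with hT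
  have hTm : Measurable T := (measurable_id.prodMk hu).prodMk (measurable_id.prodMk hv)
  have hmem : μ.map T ∈ couplings (μ.map fun x => (x, u x)) (μ.map fun x => (x, v x)) := by
    constructor
    · rw [Measure.map_map measurable_fst hTm]; rfl
    · rw [Measure.map_map measurable_snd hTm]; rfl
  refine le_trans (iInf₂_le (μ.map T) hmem) (le_of_eq ?_)
  congr 1
  rw [lintegral_map (measurable_costFn hp0.le) hTm]
  refine lintegral_congr fun x => ?_
  simp [T, Real.zero_rpow hp0.ne']

private lemma Lp4 {β : Type*} [MeasurableSpace β] (ν : Measure β) {p : ℝ} (hp : 1 ≤ p)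
    {k1 k2 k3 k4 : β → ℝ≥0∞} (m1 : Measurable k1) (m2 : Measurable k2)
    (m3 : Measurable k3) (m4 : Measurable k4) :
    (∫⁻ z, (k1 z + k2 z + k3 z + k4 z) ^ p ∂ν) ^ (1 / p) ≤
      (∫⁻ z, k1 z ^ p ∂ν) ^ (1 / p) + (∫⁻ z, k2 z ^ p ∂ν) ^ (1 / p) +
      (∫⁻ z, k3 z ^ p ∂ν) ^ (1 / p) + (∫⁻ z, k4 z ^ p ∂ν) ^ (1 / p) := by
  have A : (∫⁻ z, ((k1 + k2 + k3) + k4) z ^ p ∂ν) ^ (1 / p) ≤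
      (∫⁻ z, (k1 + k2 + k3) z ^ p ∂ν) ^ (1 / p) + (∫⁻ z, k4 z ^ p ∂ν) ^ (1 / p) :=
    ENNReal.lintegral_Lp_add_le ((m1.add m2).add m3).aemeasurable m4.aemeasurable hp
  have B : (∫⁻ z, ((k1 + k2) + k3) z ^ p ∂ν) ^ (1 / p) ≤
      (∫⁻ z, (k1 + k2) z ^ p ∂ν) ^ (1 / p) + (∫⁻ z, k3 z ^ p ∂ν) ^ (1 / p) :=
    ENNReal.lintegral_Lp_add_le (m1.add m2).aemeasurable m3.aemeasurable hp
  have C : (∫⁻ z, (k1 + k2) z ^ p ∂ν) ^ (1 / p) ≤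
      (∫⁻ z, k1 z ^ p ∂ν) ^ (1 / p) + (∫⁻ z, k2 z ^ p ∂ν) ^ (1 / p) :=
    ENNReal.lintegral_Lp_add_le m1.aemeasurable m2.aemeasurable hp
  simp only [Pi.add_apply] at A B C
  calc (∫⁻ z, (k1 z + k2 z + k3 z + k4 z) ^ p ∂ν) ^ (1 / p)
      ≤ (∫⁻ z, (k1 z + k2 z + k3 z) ^ p ∂ν) ^ (1 / p) + (∫⁻ z, k4 z ^ p ∂ν) ^ (1 / p) := A
    _ ≤ ((∫⁻ z, (k1 z + k2 z) ^ p ∂ν) ^ (1 / p) + (∫⁻ z, k3 z ^ p ∂ν) ^ (1 / p))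
          + (∫⁻ z, k4 z ^ p ∂ν) ^ (1 / p) := by gcongr
    _ ≤ _ := by
        refine le_of_le_of_eq (add_le_add (add_le_add C le_rfl) le_rfl) ?_
        abel

private lemma key_bound {p : ℝ} (hp : 1 ≤ p) (μ : Measure α) [IsProbabilityMeasure μ]
    {u v g : α → ℝ} (hu : Measurable u) (hv : Measurable v)
    (hgc : Continuous g) {M δ ε₀ : ℝ} (hM : ∀ x, |g x| ≤ M) (hδ : 0 < δ)
    (hg : ∀ x y : α, dist x y < δ → |g x - g y| ≤ ε₀)
    {π : Measure ((α × ℝ) × (α × ℝ))}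
    (hπ : π ∈ couplings (μ.map fun x => (x, u x)) (μ.map fun x => (x, v x))) :
    (∫⁻ x, ENNReal.ofReal |u x - v x| ^ p ∂μ) ^ (1 / p) ≤
      (1 + ENNReal.ofReal (2 * M) / ENNReal.ofReal δ) *
        (∫⁻ z, ENNReal.ofReal (‖z.1.1 - z.2.1‖ ^ p + |z.1.2 - z.2.2| ^ p) ∂π) ^ (1 / p)
      + 2 * (∫⁻ x, ENNReal.ofReal |v x - g x| ^ p ∂μ) ^ (1 / p) + ENNReal.ofReal ε₀ := by
  have hp0 : (0 : ℝ) < p := lt_of_lt_of_le one_pos hp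
  have hgm : Measurable g := hgc.measurable
  have hπ1 : π.map Prod.fst = μ.map fun x => (x, u x) := hπ.1
  have hπ2 : π.map Prod.snd = μ.map fun x => (x, v x) := hπ.2
  set C := ∫⁻ z, ENNReal.ofReal (‖z.1.1 - z.2.1‖ ^ p + |z.1.2 - z.2.2| ^ p) ∂π with hCdef
  set Eg := (∫⁻ x, ENNReal.ofReal |v x - g x| ^ p ∂μ) ^ (1 / p) with hEgdef
  set r := ENNReal.ofReal (2 * M) / ENNReal.ofReal δ with hrdef
  -- π is a probability measure
  have hπuniv : π Set.univ = 1 := by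
    have h1 : π Set.univ = (π.map Prod.fst) Set.univ := by
      rw [Measure.map_apply measurable_fst MeasurableSet.univ, Set.preimage_univ]
    rw [h1, hπ1, Measure.map_apply (measurable_id'.prodMk hu) MeasurableSet.univ,
      Set.preimage_univ, measure_univ]
  -- marginals on the base
  have hm1 : π.map (fun z : (α × ℝ) × (α × ℝ) => z.1.1) = μ := by
    have h0 : (fun z : (α × ℝ) × (α × ℝ) => z.1.1)
        = ((Prod.fst : α × ℝ → α) ∘ (Prod.fst : (α × ℝ) × (α × ℝ) → α × ℝ)) := rfl
    rw [h0, ← Measure.map_map measurable_fst measurable_fst, hπ1,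
      Measure.map_map measurable_fst (measurable_id'.prodMk hu)]
    have h1 : ((Prod.fst : α × ℝ → α) ∘ fun x : α => (x, u x)) = id := rfl
    rw [h1, Measure.map_id]
  have hm2 : π.map (fun z : (α × ℝ) × (α × ℝ) => z.2.1) = μ := by
    have h0 : (fun z : (α × ℝ) × (α × ℝ) => z.2.1)
        = ((Prod.fst : α × ℝ → α) ∘ (Prod.snd : (α × ℝ) × (α × ℝ) → α × ℝ)) := rfl
    rw [h0, ← Measure.map_map measurable_fst measurable_snd, hπ2,
      Measure.map_map measurable_fst (measurable_id'.prodMk hv)]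
    have h1 : ((Prod.fst : α × ℝ → α) ∘ fun x : α => (x, v x)) = id := rfl
    rw [h1, Measure.map_id]
  -- a.e. the second marginal lies on the graph of v
  have hae2 : ∀ᵐ z ∂π, z.2.2 = v z.2.1 := by
    have hG : MeasurableSet {q : α × ℝ | q.2 = v q.1} :=
      measurableSet_eq_fun measurable_snd (hv.comp measurable_fst)
    rw [ae_iff]
    have h0 : {z : (α × ℝ) × (α × ℝ) | ¬ z.2.2 = v z.2.1}
        = (Prod.snd : (α × ℝ) × (α × ℝ) → α × ℝ) ⁻¹' {q : α × ℝ | q.2 = v q.1}ᶜ := rfl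
    rw [h0, ← Measure.map_apply measurable_snd hG.compl, hπ2,
      Measure.map_apply (measurable_id'.prodMk hv) hG.compl]
    have h1 : ((fun x : α => (x, v x)) ⁻¹' {q : α × ℝ | q.2 = v q.1}ᶜ) = ∅ := by
      ext x; simp
    rw [h1]; exact measure_empty
  -- transfer the LHS integral to π
  have hF : Measurable fun q : α × ℝ => ENNReal.ofReal |q.2 - v q.1| ^ p :=
    ENNReal.continuous_rpow_const.measurable.comp
      ((measurable_snd.sub (hv.comp measurable_fst)).abs.ennreal_ofReal)
  have step1 : ∫⁻ x, ENNReal.ofReal |u x - v x| ^ p ∂μ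
      = ∫⁻ z, ENNReal.ofReal |z.1.2 - v z.1.1| ^ p ∂π := by
    have e2 : ∫⁻ z, ENNReal.ofReal |z.1.2 - v z.1.1| ^ p ∂π
        = ∫⁻ q, ENNReal.ofReal |q.2 - v q.1| ^ p ∂(π.map Prod.fst) :=
      (lintegral_map hF measurable_fst).symm
    rw [e2, hπ1, lintegral_map hF (measurable_id'.prodMk hu)]
  -- the four pieces
  set k1 : (α × ℝ) × (α × ℝ) → ℝ≥0∞ := fun z => ENNReal.ofReal |z.1.2 - z.2.2| with hk1
  set k2 : (α × ℝ) × (α × ℝ) → ℝ≥0∞ := fun z => ENNReal.ofReal |v z.2.1 - g z.2.1| with hk2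
  set k3 : (α × ℝ) × (α × ℝ) → ℝ≥0∞ := fun z => ENNReal.ofReal |g z.2.1 - g z.1.1| with hk3
  set k4 : (α × ℝ) × (α × ℝ) → ℝ≥0∞ := fun z => ENNReal.ofReal |g z.1.1 - v z.1.1| with hk4
  have m1 : Measurable k1 := (measurable_fst.snd.sub measurable_snd.snd).abs.ennreal_ofReal
  have m2 : Measurable k2 :=
    ((hv.comp measurable_snd.fst).sub (hgm.comp measurable_snd.fst)).abs.ennreal_ofReal
  have m3 : Measurable k3 :=
    ((hgm.comp measurable_snd.fst).sub (hgm.comp measurable_fst.fst)).abs.ennreal_ofReal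
  have m4 : Measurable k4 :=
    ((hgm.comp measurable_fst.fst).sub (hv.comp measurable_fst.fst)).abs.ennreal_ofReal
  have hptwise : ∀ᵐ z ∂π,
      ENNReal.ofReal |z.1.2 - v z.1.1| ≤ k1 z + k2 z + k3 z + k4 z := by
    filter_upwards [hae2] with z hz
    have hreal : |z.1.2 - v z.1.1| ≤
        |z.1.2 - z.2.2| + |v z.2.1 - g z.2.1| + |g z.2.1 - g z.1.1| + |g z.1.1 - v z.1.1| := by
      calc |z.1.2 - v z.1.1| ≤ |z.1.2 - z.2.2| + |z.2.2 - v z.1.1| := abs_sub_le _ _ _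
        _ = |z.1.2 - z.2.2| + |v z.2.1 - v z.1.1| := by rw [hz]
        _ ≤ |z.1.2 - z.2.2| + (|v z.2.1 - g z.2.1| + |g z.2.1 - v z.1.1|) := by
            gcongr; exact abs_sub_le _ _ _
        _ ≤ |z.1.2 - z.2.2| +
              (|v z.2.1 - g z.2.1| + (|g z.2.1 - g z.1.1| + |g z.1.1 - v z.1.1|)) := by
            gcongr; exact abs_sub_le _ _ _
        _ = _ := by ring
    calc ENNReal.ofReal |z.1.2 - v z.1.1|
        ≤ ENNReal.ofReal (|z.1.2 - z.2.2| + |v z.2.1 - g z.2.1| + |g z.2.1 - g z.1.1|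
            + |g z.1.1 - v z.1.1|) := ENNReal.ofReal_le_ofReal hreal
      _ = k1 z + k2 z + k3 z + k4 z := by
          simp only [hk1, hk2, hk3, hk4]
          rw [ENNReal.ofReal_add (by positivity) (abs_nonneg _),
            ENNReal.ofReal_add (by positivity) (abs_nonneg _),
            ENNReal.ofReal_add (abs_nonneg _) (abs_nonneg _)]
  have main1 : (∫⁻ x, ENNReal.ofReal |u x - v x| ^ p ∂μ) ^ (1 / p)
      ≤ (∫⁻ z, k1 z ^ p ∂π) ^ (1 / p) + (∫⁻ z, k2 z ^ p ∂π) ^ (1 / p)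
        + (∫⁻ z, k3 z ^ p ∂π) ^ (1 / p) + (∫⁻ z, k4 z ^ p ∂π) ^ (1 / p) := by
    rw [step1]
    refine le_trans ?_ (Lp4 π hp m1 m2 m3 m4)
    refine ENNReal.rpow_le_rpow ?_ (by positivity)
    refine lintegral_mono_ae ?_
    filter_upwards [hptwise] with z hz
    exact ENNReal.rpow_le_rpow hz hp0.le
  -- bound for k1
  have b1 : (∫⁻ z, k1 z ^ p ∂π) ^ (1 / p) ≤ C ^ (1 / p) := by
    refine ENNReal.rpow_le_rpow (lintegral_mono fun z => ?_) (by positivity)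
    rw [hk1]
    rw [ENNReal.ofReal_rpow_of_nonneg (abs_nonneg _) hp0.le]
    exact ENNReal.ofReal_le_ofReal (le_add_of_nonneg_left (by positivity))
  -- bounds for k2, k4 via the marginals
  have hFvg : Measurable fun x : α => ENNReal.ofReal |v x - g x| ^ p :=
    ENNReal.continuous_rpow_const.measurable.comp ((hv.sub hgm).abs.ennreal_ofReal)
  have b2 : (∫⁻ z, k2 z ^ p ∂π) = ∫⁻ x, ENNReal.ofReal |v x - g x| ^ p ∂μ := by
    rw [← hm2, lintegral_map hFvg measurable_snd.fst]
  have hFgv : Measurable fun x : α => ENNReal.ofReal |g x - v x| ^ p :=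
    ENNReal.continuous_rpow_const.measurable.comp ((hgm.sub hv).abs.ennreal_ofReal)
  have b4 : (∫⁻ z, k4 z ^ p ∂π) = ∫⁻ x, ENNReal.ofReal |v x - g x| ^ p ∂μ := by
    have h0 : (∫⁻ z, k4 z ^ p ∂π) = ∫⁻ x, ENNReal.ofReal |g x - v x| ^ p ∂μ := by
      rw [← hm1, lintegral_map hFgv measurable_fst.fst]
    rw [h0]
    exact lintegral_congr fun x => by rw [abs_sub_comm]
  -- bound for k3
  set S := {z : (α × ℝ) × (α × ℝ) | δ ≤ dist z.1.1 z.2.1} with hSdef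
  have hSmeas : MeasurableSet S :=
    measurableSet_le measurable_const (measurable_fst.fst.dist measurable_snd.fst)
  have hπS : π S ≤ C / ENNReal.ofReal δ ^ p := by
    have hne0 : (ENNReal.ofReal δ ^ p) ≠ 0 :=
      (ENNReal.rpow_pos (ENNReal.ofReal_pos.2 hδ) ENNReal.ofReal_ne_top).ne'
    have hnet : (ENNReal.ofReal δ ^ p) ≠ ⊤ :=
      ENNReal.rpow_ne_top_of_nonneg hp0.le ENNReal.ofReal_ne_top
    rw [ENNReal.le_div_iff_mul_le (Or.inl hne0) (Or.inl hnet)]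
    have e1 : π S * ENNReal.ofReal δ ^ p
        = ∫⁻ z, S.indicator (fun _ => ENNReal.ofReal δ ^ p) z ∂π := by
      rw [lintegral_indicator_const hSmeas, mul_comm]
    rw [e1]
    refine lintegral_mono fun z => ?_
    by_cases hzS : z ∈ S
    · rw [Set.indicator_of_mem hzS]
      rw [ENNReal.ofReal_rpow_of_nonneg hδ.le hp0.le]
      refine le_trans (ENNReal.ofReal_le_ofReal ?_) (ENNReal.ofReal_le_ofReal
        (le_add_of_nonneg_right (by positivity)))
      have := hzS
      rw [hSdef, Set.mem_setOf_eq, dist_eq_norm] at this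
      exact Real.rpow_le_rpow hδ.le this hp0.le
    · rw [Set.indicator_of_notMem hzS]; exact zero_le
  have b3 : (∫⁻ z, k3 z ^ p ∂π) ^ (1 / p) ≤ ENNReal.ofReal ε₀ + r * C ^ (1 / p) := by
    have hpt : ∀ z, k3 z ≤
        (fun _ : (α × ℝ) × (α × ℝ) => ENNReal.ofReal ε₀) z
          + S.indicator (fun _ => ENNReal.ofReal (2 * M)) z := by
      intro z
      by_cases hzS : z ∈ S
      · rw [Set.indicator_of_mem hzS]
        refine le_trans ?_ le_add_self
        refine ENNReal.ofReal_le_ofReal ?_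
        calc |g z.2.1 - g z.1.1| ≤ |g z.2.1| + |g z.1.1| := abs_sub _ _
          _ ≤ M + M := add_le_add (hM _) (hM _)
          _ = 2 * M := by ring
      · rw [Set.indicator_of_notMem hzS, add_zero]
        refine ENNReal.ofReal_le_ofReal (hg _ _ ?_)
        rw [hSdef, Set.mem_setOf_eq, not_le] at hzS
        rw [dist_comm]
        exact hzS
    have hmink := ENNReal.lintegral_Lp_add_le (μ := π)
      (f := fun _ : (α × ℝ) × (α × ℝ) => ENNReal.ofReal ε₀)
      (g := S.indicator fun _ => ENNReal.ofReal (2 * M))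
      measurable_const.aemeasurable ((measurable_const.indicator hSmeas)).aemeasurable hp
    simp only [Pi.add_apply] at hmink
    have c1 : (∫⁻ _ : (α × ℝ) × (α × ℝ), (ENNReal.ofReal ε₀) ^ p ∂π) ^ (1 / p)
        = ENNReal.ofReal ε₀ := by
      rw [lintegral_const, hπuniv, mul_one, ← ENNReal.rpow_mul,
        mul_one_div_cancel hp0.ne', ENNReal.rpow_one]
    have c2 : (∫⁻ z, (S.indicator (fun _ => ENNReal.ofReal (2 * M)) z) ^ p ∂π) ^ (1 / p)
        ≤ r * C ^ (1 / p) := by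
      have e2 : ∀ z, (S.indicator (fun _ => ENNReal.ofReal (2 * M)) z) ^ p
          = S.indicator (fun _ => ENNReal.ofReal (2 * M) ^ p) z := by
        intro z
        by_cases hzS : z ∈ S
        · rw [Set.indicator_of_mem hzS, Set.indicator_of_mem hzS]
        · rw [Set.indicator_of_notMem hzS, Set.indicator_of_notMem hzS,
            ENNReal.zero_rpow_of_pos hp0]
      rw [lintegral_congr e2, lintegral_indicator_const hSmeas,
        ENNReal.mul_rpow_of_nonneg _ _ (by positivity), ← ENNReal.rpow_mul,
        mul_one_div_cancel hp0.ne', ENNReal.rpow_one]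
      calc ENNReal.ofReal (2 * M) * (π S) ^ (1 / p)
          ≤ ENNReal.ofReal (2 * M) * (C / ENNReal.ofReal δ ^ p) ^ (1 / p) :=
            mul_le_mul_right (ENNReal.rpow_le_rpow hπS (by positivity)) _
        _ = ENNReal.ofReal (2 * M) * (C ^ (1 / p) / ENNReal.ofReal δ) := by
            rw [ENNReal.div_rpow_of_nonneg _ _ (by positivity), ← ENNReal.rpow_mul,
              mul_one_div_cancel hp0.ne', ENNReal.rpow_one]
        _ = r * C ^ (1 / p) := by
            rw [hrdef]; simp only [div_eq_mul_inv]; ring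
    calc (∫⁻ z, k3 z ^ p ∂π) ^ (1 / p)
        ≤ (∫⁻ z, ((fun _ : (α × ℝ) × (α × ℝ) => ENNReal.ofReal ε₀) z
            + S.indicator (fun _ => ENNReal.ofReal (2 * M)) z) ^ p ∂π) ^ (1 / p) := by
          refine ENNReal.rpow_le_rpow (lintegral_mono fun z => ?_) (by positivity)
          exact ENNReal.rpow_le_rpow (hpt z) hp0.le
      _ ≤ (∫⁻ _ : (α × ℝ) × (α × ℝ), (ENNReal.ofReal ε₀) ^ p ∂π) ^ (1 / p)
            + (∫⁻ z, (S.indicator (fun _ => ENNReal.ofReal (2 * M)) z) ^ p ∂π) ^ (1 / p) :=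
          hmink
      _ ≤ ENNReal.ofReal ε₀ + r * C ^ (1 / p) := by rw [c1]; gcongr
  -- combine
  calc (∫⁻ x, ENNReal.ofReal |u x - v x| ^ p ∂μ) ^ (1 / p)
      ≤ (∫⁻ z, k1 z ^ p ∂π) ^ (1 / p) + (∫⁻ z, k2 z ^ p ∂π) ^ (1 / p)
        + (∫⁻ z, k3 z ^ p ∂π) ^ (1 / p) + (∫⁻ z, k4 z ^ p ∂π) ^ (1 / p) := main1
    _ ≤ C ^ (1 / p) + Eg + (ENNReal.ofReal ε₀ + r * C ^ (1 / p)) + Eg := by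
        gcongr <;>
          first
            | exact b1
            | exact b3
            | exact le_of_eq (by rw [hEgdef, b2])
            | exact le_of_eq (by rw [hEgdef, b4])
    _ = (1 + r) * C ^ (1 / p) + 2 * Eg + ENNReal.ofReal ε₀ := by ring

end AuxCor313

/-- Corollary 3.13: `L^p` convergence is equivalent to transportation convergence of graphs. -/
theorem Lp_iff_graph_convergence
    {d : ℕ} (D : Set (EuclideanSpace ℝ (Fin d)))
    (hDopen : IsOpen D) (hDbdd : Bornology.IsBounded D)
    (hvol : volume D = 1)
    (p : ℝ) (hp : 1 ≤ p)
    (μ : Measure (EuclideanSpace ℝ (Fin d))) (hμ : μ = volume.restrict D)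
    (fs : ℕ → EuclideanSpace ℝ (Fin d) → ℝ)
    (hfs : ∀ n, Measurable (fs n) ∧ MemLp (fs n) (ENNReal.ofReal p) μ)
    (f : EuclideanSpace ℝ (Fin d) → ℝ)
    (hf : Measurable f) (hfp : MemLp f (ENNReal.ofReal p) μ) :
    Tendsto (fun n => ∫⁻ x, ENNReal.ofReal (|fs n x - f x| ^ p) ∂μ) atTop (𝓝 0) ↔
      Tendsto (fun n => dProd p (μ.map (fun x => (x, fs n x))) (μ.map (fun x => (x, f x))))
        atTop (𝓝 0) := by
  have hp0 : (0 : ℝ) < p := lt_of_lt_of_le one_pos hp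
  have hDmeas : MeasurableSet D := hDopen.measurableSet
  have hμprob : IsProbabilityMeasure μ := ⟨by rw [hμ, Measure.restrict_apply_univ, hvol]⟩
  constructor
  · intro hL
    have hb : ∀ n, dProd p (μ.map fun x => (x, fs n x)) (μ.map fun x => (x, f x))
        ≤ (∫⁻ x, ENNReal.ofReal (|fs n x - f x| ^ p) ∂μ) ^ (1 / p) :=
      fun n => dProd_le_lintegral hp μ (hfs n).1 hf
    have h2 : Tendsto (fun n => (∫⁻ x, ENNReal.ofReal (|fs n x - f x| ^ p) ∂μ) ^ (1 / p))
        atTop (𝓝 0) := by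
      have h0 : ((0 : ℝ≥0∞) ^ (1 / p)) = 0 :=
        ENNReal.zero_rpow_of_pos (by positivity)
      have h1 := ((ENNReal.continuous_rpow_const (y := 1 / p)).tendsto 0).comp hL
      rw [h0] at h1
      exact h1
    rw [ENNReal.tendsto_atTop_zero] at h2 ⊢
    intro η hη
    obtain ⟨N, hN⟩ := h2 η hη
    exact ⟨N, fun n hn => le_trans (hb n) (hN n hn)⟩
  · intro hG
    rw [ENNReal.tendsto_atTop_zero]
    intro ε hε
    set ε' := min ε 1 with hε'def
    have hε'0 : ε' ≠ 0 := (lt_min hε one_pos).ne'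
    have hε'1 : ε' ≤ 1 := min_le_right _ _
    have hε'top : ε' ≠ ⊤ := (lt_of_le_of_lt hε'1 ENNReal.one_lt_top).ne
    set t := ε' ^ (1 / p) with htdef
    have ht0 : t ≠ 0 := by
      rw [htdef]
      exact (ENNReal.rpow_pos (by exact pos_iff_ne_zero.2 hε'0) hε'top).ne'
    have ht1 : t ≤ 1 := by
      rw [htdef]
      calc ε' ^ (1 / p) ≤ 1 ^ (1 / p) := ENNReal.rpow_le_rpow hε'1 (by positivity)
        _ = 1 := ENNReal.one_rpow _
    have httop : t ≠ ⊤ := (lt_of_le_of_lt ht1 ENNReal.one_lt_top).ne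
    have ht4 : t / 4 ≠ 0 := by
      simp only [ne_eq, ENNReal.div_eq_zero_iff, not_or]
      exact ⟨ht0, by norm_num⟩
    have ht4top : t / 4 ≠ ⊤ := (ENNReal.div_lt_top httop (by norm_num)).ne
    -- choose a continuous compactly supported approximation of f in Lᵖ
    have hfind : MemLp (D.indicator f) (ENNReal.ofReal p) volume :=
      (memLp_indicator_iff_restrict hDmeas).2 (hμ ▸ hfp)
    obtain ⟨g, hgsupp, hgnorm, hgcont, _⟩ :=
      hfind.exists_hasCompactSupport_eLpNorm_sub_le ENNReal.ofReal_ne_top ht4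
    have hEg : (∫⁻ x, ENNReal.ofReal |f x - g x| ^ p ∂μ) ^ (1 / p) ≤ t / 4 := by
      refine le_trans ?_ hgnorm
      rw [eLpNorm_eq_lintegral_rpow_enorm_toReal
        (by simp only [ne_eq, ENNReal.ofReal_eq_zero, not_le]; linarith) ENNReal.ofReal_ne_top,
        ENNReal.toReal_ofReal hp0.le]
      refine ENNReal.rpow_le_rpow ?_ (by positivity)
      rw [hμ]
      calc ∫⁻ x in D, ENNReal.ofReal |f x - g x| ^ p ∂volume
          = ∫⁻ x in D, ‖(D.indicator f - g) x‖ₑ ^ p ∂volume := by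
            refine setLIntegral_congr_fun hDmeas (fun x hx => ?_)
            rw [Pi.sub_apply, Real.enorm_eq_ofReal_abs, Set.indicator_of_mem hx]
        _ ≤ ∫⁻ x, ‖(D.indicator f - g) x‖ₑ ^ p ∂volume :=
            lintegral_mono' Measure.restrict_le_self (le_refl _)
    obtain ⟨M, hM⟩ := hgsupp.exists_bound_of_continuous hgcont
    have hM' : ∀ x, |g x| ≤ M := fun x => by rw [← Real.norm_eq_abs]; exact hM x
    have hgu := hgsupp.uniformContinuous_of_continuous hgcont
    have hε₀pos : (0 : ℝ) < (t / 4).toReal := ENNReal.toReal_pos ht4 ht4top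
    obtain ⟨δ, hδpos, hδ⟩ := Metric.uniformContinuous_iff.1 hgu (t / 4).toReal hε₀pos
    have hgmod : ∀ x y : EuclideanSpace ℝ (Fin d),
        dist x y < δ → |g x - g y| ≤ (t / 4).toReal := fun x y h => by
      have := hδ h
      rw [Real.dist_eq] at this
      exact this.le
    set K := 1 + ENNReal.ofReal (2 * M) / ENNReal.ofReal δ with hKdef
    have hK0 : K ≠ 0 := by
      rw [hKdef]
      exact (lt_of_lt_of_le one_pos le_self_add).ne'
    have hKtop : K ≠ ⊤ := by
      rw [hKdef]
      refine ENNReal.add_ne_top.2 ⟨ENNReal.one_ne_top, ?_⟩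
      exact (ENNReal.div_lt_top ENNReal.ofReal_ne_top (ENNReal.ofReal_pos.2 hδpos).ne').ne
    set c := (t / 4) / K with hcdef
    have hc0 : 0 < c := ENNReal.div_pos ht4 hKtop
    obtain ⟨N, hN⟩ := eventually_atTop.1 (hG.eventually_lt_const hc0)
    refine ⟨N, fun n hn => ?_⟩
    have hlt := hN n hn
    obtain ⟨π, hπlt⟩ := iInf_lt_iff.1 hlt
    obtain ⟨hπmem, hπval⟩ := iInf_lt_iff.1 hπlt
    have hkey := key_bound hp μ (hfs n).1 hf hgcont hM' hδpos hgmod hπmem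
    have hofReal : ENNReal.ofReal ((t / 4).toReal) = t / 4 := ENNReal.ofReal_toReal ht4top
    have hstep : (1 + ENNReal.ofReal (2 * M) / ENNReal.ofReal δ) *
          (∫⁻ z, ENNReal.ofReal (‖z.1.1 - z.2.1‖ ^ p + |z.1.2 - z.2.2| ^ p) ∂π) ^ (1 / p)
        + 2 * (∫⁻ x, ENNReal.ofReal |f x - g x| ^ p ∂μ) ^ (1 / p)
        + ENNReal.ofReal ((t / 4).toReal) ≤ t := by
      rw [hofReal]
      calc (1 + ENNReal.ofReal (2 * M) / ENNReal.ofReal δ) *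
            (∫⁻ z, ENNReal.ofReal (‖z.1.1 - z.2.1‖ ^ p + |z.1.2 - z.2.2| ^ p) ∂π) ^ (1 / p)
          + 2 * (∫⁻ x, ENNReal.ofReal |f x - g x| ^ p ∂μ) ^ (1 / p) + t / 4
          ≤ K * c + 2 * (t / 4) + t / 4 := by
            rw [hKdef]
            gcongr <;> first | exact hπval.le | exact hEg
        _ = t / 4 + 2 * (t / 4) + t / 4 := by
            rw [hcdef, ENNReal.mul_div_cancel' (fun h => absurd h hK0) (fun h => absurd h hKtop)]
        _ = 4 * (t / 4) := by ring
        _ = t := ENNReal.mul_div_cancel' (by norm_num) (by norm_num)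
    have hconv : ∫⁻ x, ENNReal.ofReal (|fs n x - f x| ^ p) ∂μ
        = ∫⁻ x, ENNReal.ofReal |fs n x - f x| ^ p ∂μ :=
      lintegral_congr fun x => (ENNReal.ofReal_rpow_of_nonneg (abs_nonneg _) hp0.le).symm
    have hfin : (∫⁻ x, ENNReal.ofReal (|fs n x - f x| ^ p) ∂μ) ^ (1 / p) ≤ t := by
      rw [hconv]
      exact le_trans hkey hstep
    calc ∫⁻ x, ENNReal.ofReal (|fs n x - f x| ^ p) ∂μ
        = ((∫⁻ x, ENNReal.ofReal (|fs n x - f x| ^ p) ∂μ) ^ (1 / p)) ^ p := by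
          rw [← ENNReal.rpow_mul, one_div_mul_cancel hp0.ne', ENNReal.rpow_one]
      _ ≤ t ^ p := ENNReal.rpow_le_rpow hfin hp0.le
      _ = ε' := by
          rw [htdef, ← ENNReal.rpow_mul, one_div_mul_cancel hp0.ne', ENNReal.rpow_one]
      _ ≤ ε := min_le_left _ _

end
end
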